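/- arXiv:2311.03549 — 5 statements merged into one kernel-verified Lean document; each statement's English description precedes it below -/
import Mathlib

section
/- Let n ≥ 1 and 1 ≤ m ≤ n. The number of preference tuples (a_1,…,a_m) ∈ [n]^m such that all m cars are able to park on the n spots under the standard parking rule equals (n−m+1)(n+1)^{m−1}. In particular, taking m = n, the number of parking functions of length n is |PF_n| = (n+1)^{n−1}. -/
open Finset

/-- The spot where a single car parks on a one-way street with spots `1,…,n`:
`occ` is the set of already occupied spots, `p` is the car's preference, and
`r` is its backward allowance (it follows the `r`-Naples rule).  If spot `p`
is free the car parks there; otherwise it checks spots `p-1, p-2, …, max (p-r) 1`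
and parks in the first free one among these; otherwise it parks in the smallest
free spot `> p` (and `≤ n`); `none` means the car fails to park. -/
def parkSpot (n : ℕ) (occ : Finset ℕ) (p r : ℕ) : Option ℕ :=
  if p ∈ occ then
    if hb : ((Finset.Ico (max 1 (p - r)) p).filter (fun j => j ∉ occ)).Nonempty then
      some (((Finset.Ico (max 1 (p - r)) p).filter (fun j => j ∉ occ)).max' hb)
    else if hf : ((Finset.Ioc p n).filter (fun j => j ∉ occ)).Nonempty then
      some (((Finset.Ioc p n).filter (fun j => j ∉ occ)).min' hf)
    else none
  else some p

/-- The set of occupied spots after the first `i` of the `m` cars (with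
preferences `a` and backward allowances `r`) have attempted to park on a
street with `n` spots. -/
def occUpTo (n m : ℕ) (a r : Fin m → ℕ) : ℕ → Finset ℕ
  | 0 => ∅
  | i + 1 =>
    let occ := occUpTo n m a r i
    if h : i < m then
      match parkSpot n occ (a ⟨i, h⟩) (r ⟨i, h⟩) with
      | some s => insert s occ
      | none => occ
    else occ

/-- The outcome map: the spot where car `c_i` parks (`none` if it fails to park),
when the `m` cars with preferences `a` park on `n` spots, car `c_i` following
the `r i`-Naples rule. -/
def outcome (n m : ℕ) (a r : Fin m → ℕ) (i : Fin m) : Option ℕ :=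
  parkSpot n (occUpTo n m a r i.val) (a i) (r i)

/-- The outcome map with values in `ℕ∞`: failure to park is recorded as `∞`. -/
def outcomeE (n m : ℕ) (a r : Fin m → ℕ) (i : Fin m) : ENat :=
  (outcome n m a r i).elim ⊤ (fun s => (s : ENat))

/-- All `m` cars (preferences `a`, car `c_i` following the `r i`-Naples rule)
are able to park on the street with `n` spots.  For `m = n` this says that `r`
is a parking strategy for `a`, i.e. `(a, r) ∈ PR_n`. -/
def AllPark (n m : ℕ) (a r : Fin m → ℕ) : Prop :=
  ∀ i : Fin m, (outcome n m a r i).isSome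

instance (n m : ℕ) (a r : Fin m → ℕ) : Decidable (AllPark n m a r) := by
  unfold AllPark; infer_instance

/-- `a ∈ PF_{n,k}`: `a` is a `k`-Naples parking function of length `n`. -/
def NaplesPF (n k : ℕ) (a : Fin n → ℕ) : Prop :=
  AllPark n n a (fun _ => k)

instance (n k : ℕ) (a : Fin n → ℕ) : Decidable (NaplesPF n k a) := by
  unfold NaplesPF; infer_instance

/-- `a ∈ PF_n`: `a` is a (standard) parking function of length `n`. -/
def IsPF (n : ℕ) (a : Fin n → ℕ) : Prop := NaplesPF n 0 a

instance (n : ℕ) (a : Fin n → ℕ) : Decidable (IsPF n a) := by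
  unfold IsPF; infer_instance

/-- `u_α(j) = Σ_{i=j}^n |α|_i − (n−j+1) = #{i : a_i ≥ j} − (n−j+1)`. -/
def ucount (n : ℕ) (a : Fin n → ℕ) (j : ℕ) : ℤ :=
  ((Finset.univ.filter (fun i : Fin n => j ≤ a i)).card : ℤ) - ((n : ℤ) - (j : ℤ) + 1)

/-- `U_α = {j ∈ [n] : u_α(j) ≥ 1}`. -/
def Uset (n : ℕ) (a : Fin n → ℕ) : Finset ℕ :=
  (Finset.Icc 1 n).filter (fun j => 1 ≤ ucount n a j)

/-- A parking preference of length `n` is complete if `U_α = {2,…,n}`. -/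
def Complete (n : ℕ) (a : Fin n → ℕ) : Prop :=
  Uset n a = Finset.Icc 2 n

instance (n : ℕ) (a : Fin n → ℕ) : Decidable (Complete n a) := by
  unfold Complete; infer_instance

/-- `[p,q]` is a maximal interval of `U_α`. -/
def MaxInterval (n : ℕ) (a : Fin n → ℕ) (p q : ℕ) : Prop :=
  p ≤ q ∧ (∀ j, p ≤ j → j ≤ q → j ∈ Uset n a) ∧ p - 1 ∉ Uset n a ∧ q + 1 ∉ Uset n a

/-!
Pollak's circular argument.  Add a spot `0 ≡ n + 1` and let the cars park on the circle
`ZMod (n + 1)`, each taking the first free spot at or after its preference.  With `m ≤ n`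
cars every car parks, `n + 1 - m` spots stay empty, and rotating all preferences rotates
the set of occupied spots.  Hence each spot is left empty by the same number of the
`(n + 1) ^ m` preference tuples, and double counting gives `(n + 1 - m) (n + 1) ^ (m - 1)`
tuples leaving spot `0` empty.  These are exactly the images of the tuples in `[n] ^ m` that
park on the street, since a car that would drive past spot `n` lands on `0`.
-/

section Circular

variable {N m : ℕ}

open Classical in
-- The fallback value `p` (every spot taken) never occurs with fewer than `N` cars.
noncomputable def circSpot (occ : Finset (ZMod N)) (p : ZMod N) : ZMod N :=
  if h : ∃ k : ℕ, p + k ∉ occ then p + Nat.find h else p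

noncomputable def circOcc (b : Fin m → ZMod N) : ℕ → Finset (ZMod N)
  | 0 => ∅
  | i + 1 =>
    if h : i < m then insert (circSpot (circOcc b i) (b ⟨i, h⟩)) (circOcc b i)
    else circOcc b i

lemma circOcc_succ (b : Fin m → ZMod N) {i : ℕ} (h : i < m) :
    circOcc b (i + 1) = insert (circSpot (circOcc b i) (b ⟨i, h⟩)) (circOcc b i) := by
  rw [circOcc, dif_pos h]

lemma circOcc_succ_of_le (b : Fin m → ZMod N) {i : ℕ} (h : m ≤ i) :
    circOcc b (i + 1) = circOcc b i := by
  rw [circOcc, dif_neg (not_lt.2 h)]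

lemma circOcc_mono (b : Fin m → ZMod N) : Monotone (circOcc b) := by
  refine monotone_nat_of_le_succ fun i => ?_
  by_cases h : i < m
  · rw [circOcc_succ b h]
    exact subset_insert _ _
  · rw [circOcc_succ_of_le b (not_lt.1 h)]

lemma circSpot_of_run {occ : Finset (ZMod N)} {p : ZMod N} {k : ℕ} (hfree : p + k ∉ occ)
    (hrun : ∀ j < k, p + j ∈ occ) : circSpot occ p = p + k := by
  have h : ∃ k : ℕ, p + k ∉ occ := ⟨k, hfree⟩
  rw [circSpot, dif_pos h, (Nat.find_eq_iff h).2 ⟨hfree, fun j hj => not_not.2 (hrun j hj)⟩]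

lemma circSpot_of_notMem {occ : Finset (ZMod N)} {p : ZMod N} (hp : p ∉ occ) :
    circSpot occ p = p := by
  simpa using circSpot_of_run (k := 0) (by simpa using hp) (by simp)

lemma circSpot_map_addRight (occ : Finset (ZMod N)) (p t : ZMod N) :
    circSpot (occ.map (Equiv.addRight t).toEmbedding) (p + t) = circSpot occ p + t := by
  have hiff : ∀ k : ℕ,
      p + t + k ∉ occ.map (Equiv.addRight t).toEmbedding ↔ p + k ∉ occ := by
    simp [mem_map_equiv, add_right_comm p t, add_neg_cancel_right]
  by_cases h : ∃ k : ℕ, p + k ∉ occ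
  · have h' : ∃ k : ℕ, p + t + k ∉ occ.map (Equiv.addRight t).toEmbedding :=
      h.imp fun k => (hiff k).2
    rw [circSpot, circSpot, dif_pos h, dif_pos h', Nat.find_congr' (hp := h') (hq := h) (hiff _)]
    ring
  · have h' : ¬∃ k : ℕ, p + t + k ∉ occ.map (Equiv.addRight t).toEmbedding := by
      simpa only [hiff] using h
    rw [circSpot, circSpot, dif_neg h, dif_neg h']

lemma circOcc_add_const (b : Fin m → ZMod N) (t : ZMod N) (i : ℕ) :
    circOcc (b + fun _ => t) i = (circOcc b i).map (Equiv.addRight t).toEmbedding := by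
  induction i with
  | zero => rfl
  | succ i ih =>
    by_cases h : i < m
    · rw [circOcc_succ _ h, circOcc_succ _ h, ih, map_insert, Pi.add_apply,
        circSpot_map_addRight]
      rfl
    · rw [circOcc_succ_of_le _ (not_lt.1 h), circOcc_succ_of_le _ (not_lt.1 h), ih]

lemma circSpot_mem_circOcc_succ (b : Fin m → ZMod N) (j : Fin m) :
    circSpot (circOcc b j) (b j) ∈ circOcc b (j + 1) := by
  rw [circOcc_succ b j.2]
  exact mem_insert_self _ _

lemma mem_circOcc_of_lt (b : Fin m → ZMod N) (j : Fin m) {i : ℕ} (hi : j < i) :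
    b j ∈ circOcc b i := by
  refine circOcc_mono b hi ?_
  by_cases hj : b j ∈ circOcc b j
  · exact circOcc_mono b (Nat.le_succ _) hj
  · simpa only [circSpot_of_notMem hj] using circSpot_mem_circOcc_succ b j

variable [NeZero N]

lemma circSpot_notMem {occ : Finset (ZMod N)} (hocc : #occ < N) (p : ZMod N) :
    circSpot occ p ∉ occ := by
  obtain ⟨x, -, hx⟩ := exists_mem_notMem_of_card_lt_card (s := occ) (t := univ)
    (by rwa [card_univ, ZMod.card])
  have h : ∃ k : ℕ, p + k ∉ occ :=
    ⟨(x - p).val, by rwa [ZMod.natCast_zmod_val, add_sub_cancel]⟩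
  rw [circSpot, dif_pos h]
  exact Nat.find_spec h

lemma card_circOcc (hm : m ≤ N) (b : Fin m → ZMod N) (i : ℕ) :
    #(circOcc b i) = min i m := by
  induction i with
  | zero => rfl
  | succ i ih =>
    by_cases h : i < m
    · rw [circOcc_succ b h, card_insert_of_notMem (circSpot_notMem (by omega) _), ih]
      omega
    · rw [circOcc_succ_of_le b (not_lt.1 h), ih]
      omega

lemma card_notMem_circOcc_eq (s : ZMod N) :
    #(univ.filter fun b : Fin m → ZMod N => s ∉ circOcc b m)
      = #(univ.filter fun b : Fin m → ZMod N => 0 ∉ circOcc b m) :=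
  card_equiv (Equiv.addRight fun _ => -s) fun b => by
    simp [circOcc_add_const, mem_map_equiv]

lemma card_zero_notMem_circOcc (hm : m ≤ N) :
    N * #(univ.filter fun b : Fin m → ZMod N => 0 ∉ circOcc b m) = N ^ m * (N - m) := by
  have hcount : ∀ b : Fin m → ZMod N, #(univ.filter fun s => s ∉ circOcc b m) = N - m := by
    intro b
    rw [filter_not, filter_mem_eq_inter, univ_inter,
      ← compl_eq_univ_sdiff, card_compl, card_circOcc hm, min_self, ZMod.card]
  calc N * #(univ.filter fun b : Fin m → ZMod N => 0 ∉ circOcc b m)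
      = ∑ s : ZMod N, #(univ.filter fun b : Fin m → ZMod N => s ∉ circOcc b m) := by
        simp [card_notMem_circOcc_eq, ZMod.card]
    _ = ∑ b : Fin m → ZMod N, #(univ.filter fun s => s ∉ circOcc b m) := by
        simp only [card_filter]
        exact sum_comm
    _ = N ^ m * (N - m) := by simp [hcount, ZMod.card]

end Circular

section Street

variable {n m : ℕ}

lemma parkSpot_mem_Icc {occ : Finset ℕ} {p r s : ℕ} (hp : p ∈ Icc 1 n)
    (h : parkSpot n occ p r = some s) : s ∈ Icc 1 n := by
  have hp' := mem_Icc.1 hp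
  unfold parkSpot at h
  split_ifs at h with hocc hback hfwd <;> rw [Option.some_inj] at h <;> subst h
  · have := mem_Ico.1 (mem_filter.1 (max'_mem _ hback)).1
    exact mem_Icc.2 ⟨by omega, by omega⟩
  · have := mem_Ioc.1 (mem_filter.1 (min'_mem _ hfwd)).1
    exact mem_Icc.2 ⟨by omega, by omega⟩
  · exact hp

lemma parkSpot_zero_of_run {occ : Finset ℕ} {p k : ℕ} (hp : p ∈ Icc 1 n)
    (hfree : p + k ∉ occ) (hrun : ∀ j < k, p + j ∈ occ) :
    parkSpot n occ p 0 = if p + k ≤ n then some (p + k) else none := by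
  have hp' := mem_Icc.1 hp
  rcases Nat.eq_zero_or_pos k with rfl | hk
  · simp only [add_zero] at hfree
    simp [parkSpot, hfree, hp'.2]
  have hpocc : p ∈ occ := by simpa using hrun 0 hk
  have hle : ∀ j ∈ (Ioc p n).filter (· ∉ occ), p + k ≤ j := by
    intro j hj
    obtain ⟨hj, hjocc⟩ := mem_filter.1 hj
    by_contra! hjk
    exact hjocc (by simpa [Nat.add_sub_cancel' (mem_Ioc.1 hj).1.le] using hrun (j - p) (by omega))
  simp only [parkSpot, if_pos hpocc, Nat.sub_zero, max_eq_right hp'.1, Ico_self, filter_empty,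
    Finset.not_nonempty_empty, dif_neg, not_false_eq_true]
  by_cases hkn : p + k ≤ n
  · have hmem : p + k ∈ (Ioc p n).filter (· ∉ occ) :=
      mem_filter.2 ⟨mem_Ioc.2 ⟨by omega, hkn⟩, hfree⟩
    rw [dif_pos ⟨_, hmem⟩, if_pos hkn]
    exact congrArg some ((min'_eq_iff _ _ _).2 ⟨hmem, hle⟩)
  · rw [dif_neg (fun ⟨j, hj⟩ => hkn ((hle j hj).trans (mem_Ioc.1 (mem_filter.1 hj).1).2)),
      if_neg hkn]

lemma natCast_mem_image_natCast {occ : Finset ℕ} (hocc : occ ⊆ Icc 1 n) {q : ℕ}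
    (hq : q ≤ n + 1) : (q : ZMod (n + 1)) ∈ occ.image Nat.cast ↔ q ∈ occ := by
  refine ⟨fun h => ?_, mem_image_of_mem _⟩
  obtain ⟨x, hx, hxq⟩ := mem_image.1 h
  have hx' := mem_Icc.1 (hocc hx)
  rw [ZMod.natCast_eq_natCast_iff' x q (n + 1), Nat.mod_eq_of_lt (by omega : x < n + 1)] at hxq
  rcases hq.lt_or_eq with hq | rfl
  · rw [Nat.mod_eq_of_lt hq] at hxq
    rwa [← hxq]
  · rw [Nat.mod_self] at hxq
    omega

/-- A car that drives past spot `n` of the street ends up on spot `0` of the circle. -/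
lemma circSpot_image_natCast {occ : Finset ℕ} (hocc : occ ⊆ Icc 1 n) {p : ℕ}
    (hp : p ∈ Icc 1 n) :
    circSpot (occ.image Nat.cast) (p : ZMod (n + 1)) = (parkSpot n occ p 0).elim 0 Nat.cast := by
  have hp' := mem_Icc.1 hp
  have hex : ∃ k, p + k ∉ occ := ⟨n + 1 - p, fun h => by have := mem_Icc.1 (hocc h); omega⟩
  have hfree := Nat.find_spec hex
  have hrun : ∀ j < Nat.find hex, p + j ∈ occ := fun j hj => not_not.1 (Nat.find_min hex hj)
  have hk : p + Nat.find hex ≤ n + 1 := by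
    have := Nat.find_min' hex (m := n + 1 - p) fun h => by have := mem_Icc.1 (hocc h); omega
    omega
  rw [parkSpot_zero_of_run hp hfree hrun, circSpot_of_run (k := Nat.find hex)]
  · split_ifs with hkn
    · simp
    · rw [← Nat.cast_add, show p + Nat.find hex = n + 1 by omega, ZMod.natCast_self]
      rfl
  · rw [← Nat.cast_add, natCast_mem_image_natCast hocc hk]
    exact hfree
  · intro j hj
    rw [← Nat.cast_add, natCast_mem_image_natCast hocc (by omega)]
    exact hrun j hj

lemma occUpTo_succ_of_parkSpot_eq_some {a r : Fin m → ℕ} {i s : ℕ} (h : i < m)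
    (hs : parkSpot n (occUpTo n m a r i) (a ⟨i, h⟩) (r ⟨i, h⟩) = some s) :
    occUpTo n m a r (i + 1) = insert s (occUpTo n m a r i) := by
  simp only [occUpTo, dif_pos h, hs]

lemma occUpTo_succ_of_le {a r : Fin m → ℕ} {i : ℕ} (h : m ≤ i) :
    occUpTo n m a r (i + 1) = occUpTo n m a r i := by
  simp only [occUpTo, dif_neg (not_lt.2 h)]

lemma circOcc_natCast_eq_image_occUpTo {a : Fin m → ℕ} (ha : ∀ j, a j ∈ Icc 1 n) {i : ℕ}
    (hpark : ∀ j : Fin m, (j : ℕ) < i → (outcome n m a (fun _ => 0) j).isSome) :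
    occUpTo n m a (fun _ => 0) i ⊆ Icc 1 n ∧
      circOcc (fun j => (a j : ZMod (n + 1))) i
        = (occUpTo n m a (fun _ => 0) i).image Nat.cast := by
  induction i with
  | zero => exact ⟨empty_subset _, rfl⟩
  | succ i ih =>
    obtain ⟨hsub, hcirc⟩ := ih fun j hj => hpark j (by omega)
    by_cases h : i < m
    · obtain ⟨s, hs⟩ := Option.isSome_iff_exists.1 (hpark ⟨i, h⟩ (Nat.lt_succ_self i))
      have hstep := circSpot_image_natCast hsub (ha ⟨i, h⟩)
      rw [outcome] at hs
      rw [hs] at hstep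
      rw [occUpTo_succ_of_parkSpot_eq_some h hs, circOcc_succ _ h, hcirc, hstep, image_insert]
      exact ⟨insert_subset (parkSpot_mem_Icc (ha ⟨i, h⟩) hs) hsub, rfl⟩
    · rw [occUpTo_succ_of_le (not_lt.1 h), circOcc_succ_of_le _ (not_lt.1 h)]
      exact ⟨hsub, hcirc⟩

lemma allPark_zero_iff {a : Fin m → ℕ} (ha : ∀ j, a j ∈ Icc 1 n) :
    AllPark n m a (fun _ => 0) ↔
      (0 : ZMod (n + 1)) ∉ circOcc (fun j => (a j : ZMod (n + 1))) m := by
  constructor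
  · intro hA
    obtain ⟨hsub, hcirc⟩ := circOcc_natCast_eq_image_occUpTo ha (i := m) fun j _ => hA j
    rw [hcirc, ← ZMod.natCast_self, natCast_mem_image_natCast hsub le_rfl]
    exact fun h => by have := mem_Icc.1 (hsub h); omega
  · intro h0
    suffices ∀ i, ∀ j : Fin m, (j : ℕ) < i → (outcome n m a (fun _ => 0) j).isSome from
      fun j => this (j + 1) j (Nat.lt_succ_self j)
    intro i
    induction i with
    | zero => exact fun j hj => absurd hj (Nat.not_lt_zero _)
    | succ i ih =>
      intro j hj
      rcases (Nat.lt_succ_iff.1 hj).lt_or_eq with hji | rfl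
      · exact ih j hji
      obtain ⟨hsub, hcirc⟩ := circOcc_natCast_eq_image_occUpTo ha ih
      rw [Option.isSome_iff_ne_none]
      intro hnone
      have hstep := circSpot_image_natCast hsub (ha j)
      rw [← hcirc, ← outcome, hnone, Option.elim_none] at hstep
      have hzero := circSpot_mem_circOcc_succ (fun j => (a j : ZMod (n + 1))) j
      rw [hstep] at hzero
      exact h0 (circOcc_mono _ j.2 hzero)

lemma card_allPark_zero_eq_card_circ :
    #((Fintype.piFinset fun _ : Fin m => Icc 1 n).filter (fun a => AllPark n m a (fun _ => 0)))
      = #(univ.filter fun b : Fin m → ZMod (n + 1) => 0 ∉ circOcc b m) := by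
  refine card_nbij' (fun a j => (a j : ZMod (n + 1))) (fun b j => (b j).val) ?_ ?_ ?_ ?_
  · intro a ha
    obtain ⟨hpi, hA⟩ := mem_filter.1 ha
    exact mem_filter.2 ⟨mem_univ _, (allPark_zero_iff (Fintype.mem_piFinset.1 hpi)).1 hA⟩
  · intro b hb
    have h0 := (mem_filter.1 hb).2
    have hval : ∀ j, (b j).val ∈ Icc 1 n := fun j =>
      have hne : b j ≠ 0 := fun h => h0 (h ▸ mem_circOcc_of_lt b j j.2)
      mem_Icc.2 ⟨Nat.one_le_iff_ne_zero.2 ((ZMod.val_ne_zero _).2 hne),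
        Nat.lt_succ_iff.1 (ZMod.val_lt _)⟩
    refine mem_filter.2 ⟨Fintype.mem_piFinset.2 hval, (allPark_zero_iff hval).2 ?_⟩
    simpa only [ZMod.natCast_zmod_val] using h0
  · intro a ha
    funext j
    have := mem_Icc.1 (Fintype.mem_piFinset.1 (mem_filter.1 ha).1 j)
    exact ZMod.val_cast_of_lt (by omega)
  · intro b _
    funext j
    exact ZMod.natCast_zmod_val (b j)

lemma card_allPark_zero (hm : 1 ≤ m) (hmn : m ≤ n) :
    #((Fintype.piFinset fun _ : Fin m => Icc 1 n).filter (fun a => AllPark n m a (fun _ => 0)))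
      = (n - m + 1) * (n + 1) ^ (m - 1) := by
  have hcount := card_zero_notMem_circOcc (N := n + 1) (m := m) (by omega)
  rw [card_allPark_zero_eq_card_circ]
  obtain ⟨k, rfl⟩ : ∃ k, m = k + 1 := ⟨m - 1, by omega⟩
  rw [pow_succ', show n + 1 - (k + 1) = n - (k + 1) + 1 by omega, mul_assoc] at hcount
  rw [Nat.add_sub_cancel, Nat.eq_of_mul_eq_mul_left (Nat.succ_pos n) hcount, mul_comm]

end Street

/-- the number of preference tuples in `[n]^m` letting all `m`
cars park on `n` spots under the standard rule is `(n−m+1)(n+1)^{m−1}`;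
in particular `|PF_n| = (n+1)^{n−1}`. -/
theorem statement1 (n m : ℕ) (hn : 1 ≤ n) (hm : 1 ≤ m) (hmn : m ≤ n) :
    ((Fintype.piFinset fun _ : Fin m => Finset.Icc 1 n).filter
        (fun a => AllPark n m a (fun _ => 0))).card
      = (n - m + 1) * (n + 1) ^ (m - 1) ∧
    ((Fintype.piFinset fun _ : Fin n => Finset.Icc 1 n).filter
        (fun a => IsPF n a)).card = (n + 1) ^ (n - 1) := by
  refine ⟨card_allPark_zero hm hmn, ?_⟩
  have hpf := card_allPark_zero hn le_rfl
  rw [Nat.sub_self, zero_add, one_mul] at hpf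
  exact hpf
end

section
/- Let n ≥ m ≥ 1. The number of parking functions α ∈ PF_n such that exactly m of the entries a_1,…,a_n are equal to 1 is binom(n−1, m−1) · n^{n−m}. -/
open Finset

/-!
Under the standard rule all cars park iff, for every `j`, at most `n + 1 - j` cars prefer a spot
`≥ j`. This condition ignores the cars preferring spot `1`, so once their set `S` is fixed the
other `n - m` cars form a parking function on the spots `2, …, n`.

Parking functions of `k` cars on `p` spots are counted by Pollak's rotation argument on
`ℤ/(p+1)`: every preference map has exactly `p + 1 - k` rotations that park on the nonzero
residues. These rotations are the strict records, in one period, of the walk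
`t ↦ #{cars preferring a residue < t} - t`, whose steps are `≥ -1` and which drifts down by
`p + 1 - k` per period; the records telescope against the running minimum.

So each `S` contributes `m n^(n-m-1)`, and `C(n,m) · m · n^(n-m-1) = C(n-1,m-1) · n^(n-m)`.
-/

def ParkingCriterion {ι : Type*} [Fintype ι] (n : ℕ) (a : ι → ℕ) : Prop :=
  ∀ j ∈ Icc 1 n, #{i | j ≤ a i} ≤ n + 1 - j

instance {ι : Type*} [Fintype ι] (n : ℕ) (a : ι → ℕ) : Decidable (ParkingCriterion n a) := by
  unfold ParkingCriterion; infer_instance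

section StandardRule

variable {n k p s : ℕ} {occ : Finset ℕ}

lemma parkSpot_zero_eq_some (hp : p ≤ n) (h : parkSpot n occ p 0 = some s) :
    s ∈ Icc p n ∧ s ∉ occ ∧ ∀ t ∈ Ico p s, t ∈ occ := by
  unfold parkSpot at h
  split_ifs at h with hpo hback hfwd
  · exact absurd hback (by simp)
  · obtain rfl := Option.some.inj h
    obtain ⟨hmem, hfree⟩ := mem_filter.1 (min'_mem _ hfwd)
    refine ⟨mem_Icc.2 ⟨(mem_Ioc.1 hmem).1.le, (mem_Ioc.1 hmem).2⟩, hfree, fun t ht => ?_⟩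
    obtain ⟨hpt, hts⟩ := mem_Ico.1 ht
    rcases hpt.eq_or_lt with rfl | hpt
    · exact hpo
    · by_contra htocc
      have := (mem_Ioc.1 hmem).2
      exact (min'_le _ t (mem_filter.2 ⟨mem_Ioc.2 ⟨hpt, by omega⟩, htocc⟩)).not_gt hts
  · obtain rfl := Option.some.inj h
    exact ⟨mem_Icc.2 ⟨le_rfl, hp⟩, hpo, by simp⟩

lemma parkSpot_zero_eq_none (h : parkSpot n occ p 0 = none) : Icc p n ⊆ occ := by
  unfold parkSpot at h
  split_ifs at h with hpo hback hfwd
  intro t ht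
  rcases (mem_Icc.1 ht).1.eq_or_lt with rfl | hpt
  · exact hpo
  · by_contra htocc
    exact hfwd ⟨t, mem_filter.2 ⟨mem_Ioc.2 ⟨hpt, (mem_Icc.1 ht).2⟩, htocc⟩⟩

variable {a r : Fin k → ℕ}

lemma mem_occUpTo_succ {i : ℕ} (h : i < k) :
    s ∈ occUpTo n k a r (i + 1) ↔ s ∈ occUpTo n k a r i ∨ outcome n k a r ⟨i, h⟩ = some s := by
  rw [occUpTo, dif_pos h]
  unfold outcome
  split <;> simp_all [eq_comm, or_comm]

lemma mem_occUpTo_iff {i : ℕ} :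
    s ∈ occUpTo n k a r i ↔ ∃ i' : Fin k, i' < i ∧ outcome n k a r i' = some s := by
  induction i with
  | zero => simp [occUpTo]
  | succ i ih =>
    by_cases h : i < k
    · rw [mem_occUpTo_succ h, ih]
      constructor
      · rintro (⟨i', hi', ho⟩ | ho)
        · exact ⟨i', by omega, ho⟩
        · exact ⟨⟨i, h⟩, by simp, ho⟩
      · rintro ⟨i', hi', ho⟩
        rcases (Nat.lt_succ_iff_lt_or_eq.1 hi') with hi' | hi'
        · exact Or.inl ⟨i', hi', ho⟩
        · rw [show i' = ⟨i, h⟩ from Fin.ext hi'] at ho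
          exact Or.inr ho
    · rw [occUpTo, dif_neg h, ih]
      exact exists_congr fun i' => and_congr_left' ⟨fun h' => by omega, fun _ => by omega⟩

lemma occUpTo_mono {i i' : ℕ} (h : i ≤ i') : occUpTo n k a r i ⊆ occUpTo n k a r i' :=
  fun _ hs => mem_occUpTo_iff.2 <| (mem_occUpTo_iff.1 hs).imp fun _ ⟨hlt, ho⟩ => ⟨by omega, ho⟩

lemma outcome_zero_injective (ha : ∀ i, a i ≤ n) {i₁ i₂ : Fin k}
    (h₁ : outcome n k a (fun _ => 0) i₁ = some s) (h₂ : outcome n k a (fun _ => 0) i₂ = some s) :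
    i₁ = i₂ := by
  wlog hlt : i₁ < i₂ generalizing i₁ i₂
  · rcases (not_lt.1 hlt).eq_or_lt with heq | hgt
    · exact heq.symm
    · exact (this h₂ h₁ hgt).symm
  exact absurd (mem_occUpTo_iff.2 ⟨i₁, hlt, h₁⟩) (parkSpot_zero_eq_some (ha i₂) h₂).2.1

lemma parkingCriterion_of_allPark (ha : ∀ i, a i ≤ n) (h : AllPark n k a fun _ => 0) :
    ParkingCriterion n a := by
  intro j _
  rw [← Nat.card_Icc]
  refine card_le_card_of_injOn (fun i => (outcome n k a (fun _ => 0) i).get (h i))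
    (fun i hi => ?_) fun i₁ _ i₂ _ he => outcome_zero_injective ha
      (Option.eq_some_of_isSome (h i₁))
      ((Option.eq_some_of_isSome (h i₂)).trans (congrArg some he.symm))
  have := (parkSpot_zero_eq_some (ha i) (Option.eq_some_of_isSome (h i))).1
  simp only [mem_coe, mem_filter, mem_univ, true_and, mem_Icc] at hi this ⊢
  exact ⟨hi.trans this.1, this.2⟩


lemma exists_outcome_eq_of_mem_occUpTo (ha : ∀ i, a i ∈ Icc 1 n) {i₀ j t : ℕ}
    (hfree : j = 1 ∨ j - 1 ∉ occUpTo n k a (fun _ => 0) i₀) (hjt : j ≤ t)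
    (ht : t ∈ occUpTo n k a (fun _ => 0) i₀) :
    ∃ i : Fin k, i < i₀ ∧ j ≤ a i ∧ outcome n k a (fun _ => 0) i = some t := by
  obtain ⟨i, hi, ho⟩ := mem_occUpTo_iff.1 ht
  refine ⟨i, hi, not_lt.1 fun hlt => ?_, ho⟩
  obtain ⟨ha1, han⟩ := mem_Icc.1 (ha i)
  have hpassed := (parkSpot_zero_eq_some han ho).2.2 (j - 1) (mem_Ico.2 ⟨by omega, by omega⟩)
  exact hfree.elim (by omega) fun h => h (occUpTo_mono hi.le hpassed)

lemma allPark_of_parkingCriterion (ha : ∀ i, a i ∈ Icc 1 n) (hpc : ParkingCriterion n a) :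
    AllPark n k a fun _ => 0 := by
  intro i₀
  by_contra hfail
  set occ := occUpTo n k a (fun _ => 0) i₀
  have hblocked : Icc (a i₀) n ⊆ occ :=
    parkSpot_zero_eq_none (Option.not_isSome_iff_eq_none.1 hfail)
  have hex : ∃ j, 1 ≤ j ∧ Icc j n ⊆ occ := ⟨a i₀, (mem_Icc.1 (ha i₀)).1, hblocked⟩
  obtain ⟨hj1, hjocc⟩ := Nat.find_spec hex
  set j := Nat.find hex
  have hja : j ≤ a i₀ := Nat.find_min' hex ⟨(mem_Icc.1 (ha i₀)).1, hblocked⟩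
  have hfree : j = 1 ∨ j - 1 ∉ occ := by
    refine or_iff_not_imp_left.2 fun hj hmem => Nat.find_min hex (m := j - 1) (by omega)
      ⟨by omega, fun t ht => ?_⟩
    rcases (mem_Icc.1 ht).1.eq_or_lt with rfl | hlt
    · exact hmem
    · exact hjocc (mem_Icc.2 ⟨by omega, (mem_Icc.1 ht).2⟩)
  have hcover : Icc j n ⊆ (({i | j ≤ a i} : Finset (Fin k)).erase i₀).image
      fun i => (outcome n k a (fun _ => 0) i).getD 0 := by
    intro t ht
    obtain ⟨i, hi, hji, ho⟩ :=
      exists_outcome_eq_of_mem_occUpTo ha hfree (mem_Icc.1 ht).1 (hjocc ht)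
    exact mem_image.2 ⟨i, mem_erase.2 ⟨Fin.ne_of_lt hi, by simpa using hji⟩, by simp [ho]⟩
  have hle := (card_le_card hcover).trans card_image_le
  have hi₀ : i₀ ∈ ({i | j ≤ a i} : Finset (Fin k)) := by simpa using hja
  rw [Nat.card_Icc, card_erase_of_mem hi₀] at hle
  have := hpc j (mem_Icc.2 ⟨hj1, hja.trans (mem_Icc.1 (ha i₀)).2⟩)
  have := card_pos.2 ⟨i₀, hi₀⟩
  omega

lemma allPark_iff_parkingCriterion (ha : ∀ i, a i ∈ Icc 1 n) :
    AllPark n k a (fun _ => 0) ↔ ParkingCriterion n a :=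
  ⟨parkingCriterion_of_allPark fun i => (mem_Icc.1 (ha i)).2, allPark_of_parkingCriterion ha⟩

end StandardRule

section PrefixMin

variable (G : ℕ → ℤ)

def prefixMin : ℕ → ℤ
  | 0 => G 0
  | t + 1 => min (prefixMin t) (G (t + 1))

variable {G}

lemma lt_prefixMin_iff {a : ℤ} {t : ℕ} : a < prefixMin G t ↔ ∀ u ≤ t, a < G u := by
  induction t with
  | zero => simp [prefixMin]
  | succ t ih =>
    simp only [prefixMin, lt_min_iff, ih]
    refine ⟨fun ⟨h, ht⟩ u hu => ?_, fun h => ⟨fun u hu => h u (by omega), h _ le_rfl⟩⟩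
    rcases Nat.lt_succ_iff_lt_or_eq.1 (Nat.lt_succ_of_le hu) with hu | rfl
    · exact h u (by omega)
    · exact ht

lemma prefixMin_le {t u : ℕ} (hu : u ≤ t) : prefixMin G t ≤ G u :=
  not_lt.1 fun h => (lt_prefixMin_iff.1 h u hu).false

lemma prefixMin_sub_succ (hstep : ∀ t, G t - 1 ≤ G (t + 1)) (t : ℕ) :
    prefixMin G t - prefixMin G (t + 1) = if G (t + 1) < prefixMin G t then 1 else 0 := by
  have := prefixMin_le (G := G) (le_refl t)
  have := hstep t
  simp only [prefixMin]
  split_ifs <;> omega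

lemma prefixMin_add_period {q : ℕ} {d : ℤ} (hper : ∀ t, G (t + q) = G t - d) (t : ℕ) :
    prefixMin G (t + q) = min (prefixMin G q) (prefixMin G t - d) := by
  induction t with
  | zero =>
    have := prefixMin_le (G := G) (le_refl q)
    have := hper 0
    simp only [zero_add] at *
    simp only [prefixMin]
    omega
  | succ t ih =>
    rw [show t + 1 + q = t + q + 1 by omega, prefixMin, ih, prefixMin,
      show t + q + 1 = t + 1 + q by omega, hper, min_assoc, min_sub_sub_right]

lemma lt_window_iff_lt_prefixMin {q d : ℕ} (hper : ∀ t, G (t + q) = G t - d) {s : ℕ}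
    (hs : s < q) :
    (∀ u ∈ Ioc s (s + q), G (s + q + 1) < G u) ↔ G (s + q + 1) < prefixMin G (s + q) := by
  rw [lt_prefixMin_iff]
  refine ⟨fun h u hu => ?_, fun h u hu => h u (mem_Ioc.1 hu).2⟩
  by_cases hsu : s < u
  · exact h u (mem_Ioc.2 ⟨hsu, hu⟩)
  · -- `G u` exceeds its translate `G (u + q)`, which lies in the window, by `d ≥ 0`
    have := h (u + q) (mem_Ioc.2 ⟨by omega, by omega⟩)
    rw [hper] at this
    omega

theorem card_window_records {q d : ℕ} (hstep : ∀ t, G t - 1 ≤ G (t + 1))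
    (hper : ∀ t, G (t + q) = G t - d) :
    #{s ∈ range q | ∀ u ∈ Ioc s (s + q), G (s + q + 1) < G u} = d := by
  have hrec : ∑ s ∈ range q, (prefixMin G (q + s) - prefixMin G (q + s + 1))
      = prefixMin G q - prefixMin G (q + q) := sum_range_sub' _ q
  rw [prefixMin_add_period hper] at hrec
  zify
  rw [filter_congr fun s hs => lt_window_iff_lt_prefixMin hper (mem_range.1 hs),
    natCast_card_filter]
  refine (sum_congr rfl fun s _ => ?_).trans (hrec.trans (by omega))
  rw [prefixMin_sub_succ hstep, add_comm q s]

end PrefixMin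

section Circular

variable {ι : Type*} [Fintype ι] {q : ℕ}

def arrivals (f : ι → ZMod q) (t : ℕ) : ℕ := #{i | f i = t}

def parkingWalk (f : ι → ZMod q) (t : ℕ) : ℤ := ∑ u ∈ range t, (arrivals f u : ℤ) - t

def ParksOnNonzero (g : ι → ZMod q) : Prop :=
  (∀ i, g i ≠ 0) ∧ ParkingCriterion (q - 1) fun i => (g i).val

instance (g : ι → ZMod q) : Decidable (ParksOnNonzero g) := by
  unfold ParksOnNonzero; infer_instance

lemma parkingWalk_add (f : ι → ZMod q) (s j : ℕ) :
    parkingWalk f (s + j) = parkingWalk f s + ∑ u ∈ range j, (arrivals f (s + u) : ℤ) - j := by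
  simp only [parkingWalk, sum_range_add, Nat.cast_add]
  ring

lemma parkingWalk_succ (f : ι → ZMod q) (t : ℕ) :
    parkingWalk f (t + 1) = parkingWalk f t + arrivals f t - 1 := by
  simp [parkingWalk_add]

variable [NeZero q]

lemma card_val_sub_lt (f : ι → ZMod q) (s : ℕ) {j : ℕ} (hj : j ≤ q) :
    (#{i | (f i - (s : ZMod q)).val < j} : ℤ)
      = parkingWalk f (s + j) - parkingWalk f s + j := by
  have hsum : #{i | (f i - (s : ZMod q)).val < j} = ∑ u ∈ range j, arrivals f (s + u) := by
    rw [card_eq_sum_card_fiberwise (f := fun i => (f i - (s : ZMod q)).val) (t := range j)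
      fun i hi => mem_range.2 (mem_filter.1 hi).2]
    refine sum_congr rfl fun u hu => ?_
    have huq : u < q := (mem_range.1 hu).trans_le hj
    rw [arrivals, filter_filter]
    refine congrArg card (filter_congr fun i _ => ?_)
    dsimp only
    constructor
    · rintro ⟨-, h⟩
      rw [Nat.cast_add, ← h, ZMod.natCast_zmod_val]
      ring
    · intro h
      rw [h, Nat.cast_add, add_sub_cancel_left, ZMod.val_natCast_of_lt huq]
      exact ⟨mem_range.1 hu, rfl⟩
  rw [hsum, parkingWalk_add]
  push_cast
  ring

lemma parkingWalk_add_period (f : ι → ZMod q) (t : ℕ) :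
    parkingWalk f (t + q) = parkingWalk f t + Fintype.card ι - q := by
  have h := card_val_sub_lt f t le_rfl
  rw [filter_true_of_mem fun i _ => ZMod.val_lt _, card_univ] at h
  linarith

lemma parksOnNonzero_sub_iff (f : ι → ZMod q) (s : ℕ) :
    ParksOnNonzero (fun i => f i - (s : ZMod q)) ↔
      ∀ u ∈ Ioc s (s + q), parkingWalk f (s + q + 1) < parkingWalk f u := by
  obtain ⟨C, hCdef⟩ : ∃ C : ℕ → ℕ, ∀ j, C j = #{i | (f i - (s : ZMod q)).val < j} :=
    ⟨_, fun _ => rfl⟩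
  have hC (j : ℕ) (hj : j ≤ q) : (C j : ℤ) = parkingWalk f (s + j) - parkingWalk f s + j :=
    hCdef j ▸ card_val_sub_lt f s hj
  have hCle (j : ℕ) : #{i | j ≤ (f i - (s : ZMod q)).val} + C j = Fintype.card ι := by
    simp only [hCdef, ← not_le]
    exact card_filter_add_card_filter_not _
  have hzero : (∀ i, f i - (s : ZMod q) ≠ 0) ↔ C 1 = 0 := by
    simp [hCdef, filter_eq_empty_iff]
  have hlast : parkingWalk f (s + q + 1) = parkingWalk f (s + 1) + Fintype.card ι - q := by
    rw [show s + q + 1 = s + 1 + q by omega, parkingWalk_add_period]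
  have hq := NeZero.pos q
  have hC1 := hC 1 hq
  have hCq := hC q le_rfl
  have hCqk : C q = Fintype.card ι := by
    rw [hCdef, filter_true_of_mem fun i _ => ZMod.val_lt _, card_univ]
  simp only [ParksOnNonzero, ParkingCriterion, hzero]
  constructor
  · rintro ⟨h1, hpc⟩ u hu
    obtain ⟨hsu, hus⟩ := mem_Ioc.1 hu
    obtain ⟨j, rfl⟩ : ∃ j, u = s + j := ⟨u - s, by omega⟩
    have := hC j (by omega)
    rcases (show j < q ∨ j = q by omega) with hj | rfl
    · have := hpc j (mem_Icc.2 ⟨by omega, by omega⟩)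
      have := hCle j
      omega
    · omega
  · intro h
    -- at `u = s + q` the condition says that no car prefers the residue `s`
    have := h (s + q) (mem_Ioc.2 ⟨by omega, le_rfl⟩)
    have h1 : C 1 = 0 := by omega
    refine ⟨h1, fun j hj => ?_⟩
    obtain ⟨hj1, hjq⟩ := mem_Icc.1 hj
    have := h (s + j) (mem_Ioc.2 ⟨by omega, by omega⟩)
    have := hC j (by omega)
    have := hCle j
    omega

lemma card_parksOnNonzero_sub (f : ι → ZMod q) (hk : Fintype.card ι ≤ q) :
    #{s : ZMod q | ParksOnNonzero fun i => f i - s} = q - Fintype.card ι := by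
  have hstep (t : ℕ) : parkingWalk f t - 1 ≤ parkingWalk f (t + 1) := by
    rw [parkingWalk_succ]
    omega
  have hper (t : ℕ) : parkingWalk f (t + q) = parkingWalk f t - (q - Fintype.card ι : ℕ) := by
    rw [parkingWalk_add_period, Nat.cast_sub hk]
    ring
  rw [← card_window_records hstep hper]
  refine card_nbij' ZMod.val Nat.cast (fun s hs => ?_) (fun s hs => ?_) (fun s _ => ?_)
    (fun s hs => ?_)
  · simp only [mem_coe, mem_filter, mem_univ, true_and, mem_range] at hs ⊢
    rw [← parksOnNonzero_sub_iff, ZMod.natCast_zmod_val]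
    exact ⟨ZMod.val_lt s, hs⟩
  · simp only [mem_coe, mem_filter, mem_univ, true_and, mem_range] at hs ⊢
    exact (parksOnNonzero_sub_iff f s).2 hs.2
  · exact ZMod.natCast_zmod_val s
  · simp only [mem_coe, mem_filter, mem_range] at hs
    exact ZMod.val_natCast_of_lt hs.1

theorem card_parksOnNonzero_mul [DecidableEq ι] (hk : Fintype.card ι ≤ q) :
    #{g : ι → ZMod q | ParksOnNonzero g} * q = (q - Fintype.card ι) * q ^ Fintype.card ι := by
  have hrot (s : ZMod q) : #{f : ι → ZMod q | ParksOnNonzero fun i => f i - s}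
      = #{g : ι → ZMod q | ParksOnNonzero g} :=
    card_equiv (Equiv.subRight fun _ => s) fun f => by simp [Pi.sub_def]
  have hdouble : ∑ f : ι → ZMod q, #{s : ZMod q | ParksOnNonzero fun i => f i - s}
      = ∑ s : ZMod q, #{f : ι → ZMod q | ParksOnNonzero fun i => f i - s} := by
    simp only [card_filter]
    exact sum_comm
  simp only [card_parksOnNonzero_sub _ hk, hrot, sum_const, card_univ, Fintype.card_fun,
    ZMod.card, smul_eq_mul] at hdouble
  rw [mul_comm, ← hdouble, mul_comm]

end Circular

/-- The Konheim–Weiss count, multiplied by `p + 1` so that it stays in `ℕ` for `card ι = 0`. -/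
theorem card_parkingCriterion_mul {ι : Type*} [Fintype ι] [DecidableEq ι] (p : ℕ)
    (hk : Fintype.card ι ≤ p + 1) :
    #{b ∈ Fintype.piFinset fun _ : ι => Icc 1 p | ParkingCriterion p b} * (p + 1)
      = (p + 1 - Fintype.card ι) * (p + 1) ^ Fintype.card ι := by
  rw [← card_parksOnNonzero_mul hk]
  congr 1
  have hval {b : ι → ℕ} (hb : ∀ i, b i ∈ Icc 1 p) (i : ι) : (b i : ZMod (p + 1)).val = b i :=
    ZMod.val_natCast_of_lt (Nat.lt_succ_of_le (mem_Icc.1 (hb i)).2)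
  refine card_nbij' (fun b i => (b i : ZMod (p + 1))) (fun g i => (g i).val)
    (fun b hb => ?_) (fun g hg => ?_) (fun b hb => ?_) (fun g _ => ?_)
  · simp only [mem_coe, mem_filter, Fintype.mem_piFinset, mem_univ, true_and] at hb ⊢
    refine ⟨fun i h => ?_, ?_⟩
    · have := hval hb.1 i
      rw [show (b i : ZMod (p + 1)) = 0 from h, ZMod.val_zero] at this
      exact absurd (mem_Icc.1 (hb.1 i)).1 (by omega)
    · simpa only [hval hb.1, Nat.add_sub_cancel] using hb.2
  · simp only [mem_coe, mem_filter, Fintype.mem_piFinset, mem_univ, true_and, ParksOnNonzero,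
      Nat.add_sub_cancel] at hg ⊢
    refine ⟨fun i => mem_Icc.2 ⟨Nat.one_le_iff_ne_zero.2 ?_, Nat.lt_succ_iff.1 (ZMod.val_lt _)⟩,
      hg.2⟩
    exact (ZMod.val_ne_zero _).2 (hg.1 i)
  · simp only [mem_coe, mem_filter, Fintype.mem_piFinset] at hb
    exact funext (hval hb.1)
  · exact funext fun i => ZMod.natCast_zmod_val (g i)

section Restriction

variable {ι : Type*} [Fintype ι] [DecidableEq ι] {S : Finset ι} {n : ℕ}

lemma card_subtype_compl_filter {P : ι → Prop} [DecidablePred P] (hP : ∀ i ∈ S, ¬ P i) :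
    #{x : ↥Sᶜ | P x} = #{i | P i} := by
  refine card_bij (fun x _ => x.val) (fun x hx => by simpa using hx)
    (fun x _ y _ h => Subtype.ext h) fun i hi => ?_
  have hi : P i := by simpa using hi
  exact ⟨⟨i, mem_compl.2 fun hS => hP i hS hi⟩, by simpa using hi, rfl⟩

lemma parkingCriterion_restrict_sub_one {a : ι → ℕ} (hS : ∀ i ∈ S, a i ≤ 1)
    (hpc : ParkingCriterion n a) : ParkingCriterion (n - 1) fun x : ↥Sᶜ => a x - 1 := by
  intro j hj
  beta_reduce
  obtain ⟨hj1, hjn⟩ := mem_Icc.1 hj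
  have := hpc (j + 1) (mem_Icc.2 ⟨by omega, by omega⟩)
  rw [← card_subtype_compl_filter fun i hi => by have := hS i hi; omega] at this
  have hshift : #{x : ↥Sᶜ | j ≤ a x - 1} = #{x : ↥Sᶜ | j + 1 ≤ a x} :=
    congrArg card (filter_congr fun x _ => by omega)
  omega

lemma parkingCriterion_extend_add_one {b : ↥Sᶜ → ℕ} (hι : Fintype.card ι ≤ n)
    (hpc : ParkingCriterion (n - 1) b) :
    ParkingCriterion n fun i => if h : i ∈ Sᶜ then b ⟨i, h⟩ + 1 else 1 := by
  intro j hj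
  obtain ⟨hj1, hjn⟩ := mem_Icc.1 hj
  beta_reduce
  rcases hj1.eq_or_lt with rfl | hj1
  · exact (card_filter_le _ _).trans (by rw [card_univ]; omega)
  rw [← card_subtype_compl_filter fun i hi => by rw [dif_neg fun h => mem_compl.1 h hi]; omega]
  have hshift : #{x : ↥Sᶜ | j ≤ if h : (x : ι) ∈ Sᶜ then b ⟨x, h⟩ + 1 else 1}
      = #{x | j - 1 ≤ b x} :=
    congrArg card (filter_congr fun x _ => by simp only [dif_pos x.2, Subtype.coe_eta]; omega)
  have := hpc (j - 1) (mem_Icc.2 ⟨by omega, by omega⟩)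
  omega

lemma card_parkingCriterion_ones_eq (hι : Fintype.card ι ≤ n) :
    #{a ∈ Fintype.piFinset fun _ : ι => Icc 1 n | ParkingCriterion n a ∧
        ({i | a i = 1} : Finset ι) = S}
      = #{b ∈ Fintype.piFinset fun _ : ↥Sᶜ => Icc 1 (n - 1) | ParkingCriterion (n - 1) b} := by
  refine card_nbij' (fun a x => a x - 1) (fun b i => if h : i ∈ Sᶜ then b ⟨i, h⟩ + 1 else 1)
    (fun a ha => ?_) (fun b hb => ?_) (fun a ha => ?_) (fun b _ => ?_) <;> dsimp only
  · obtain ⟨hrange, hpc, rfl⟩ := mem_filter.1 ha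
    simp only [Fintype.mem_piFinset, mem_Icc] at hrange
    refine mem_filter.2 ⟨Fintype.mem_piFinset.2 fun x => mem_Icc.2 ?_,
      parkingCriterion_restrict_sub_one (fun i hi => by simp at hi; omega) hpc⟩
    have : a x ≠ 1 := by simpa using x.2
    have := hrange x
    omega
  · obtain ⟨hrange, hpc⟩ := mem_filter.1 hb
    simp only [Fintype.mem_piFinset, mem_Icc] at hrange
    refine mem_filter.2 ⟨Fintype.mem_piFinset.2 fun i => mem_Icc.2 ?_,
      parkingCriterion_extend_add_one hι hpc, ?_⟩
    · have := Fintype.card_pos_iff.2 ⟨i⟩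
      split_ifs with h
      · have := hrange ⟨i, h⟩; omega
      · omega
    · ext i
      by_cases h : i ∈ Sᶜ
      · have := hrange ⟨i, h⟩
        simp [mem_compl.1 h]
        omega
      · simp [not_not.1 (mt mem_compl.2 h)]
  · obtain ⟨hrange, -, hS⟩ := mem_filter.1 ha
    funext i
    have := mem_Icc.1 (Fintype.mem_piFinset.1 hrange i)
    by_cases h : i ∈ Sᶜ
    · simp only [h, dite_true]
      omega
    · rw [dif_neg h]
      rw [← hS, mem_compl, not_not, mem_filter] at h
      exact h.2.symm
  · funext x
    simp

end Restriction

lemma card_parkingCriterion_ones_mul {n : ℕ} (S : Finset (Fin n)) :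
    #{a ∈ Fintype.piFinset fun _ : Fin n => Icc 1 n | ParkingCriterion n a ∧
        ({i | a i = 1} : Finset (Fin n)) = S} * n = #S * n ^ (n - #S) := by
  rcases Nat.eq_zero_or_pos n with rfl | hn
  · simp [Subsingleton.elim S ∅]
  have hSn := card_le_univ S
  rw [Fintype.card_fin] at hSn
  have hcard : Fintype.card ↥Sᶜ = n - #S := by simp
  have := card_parkingCriterion_mul (ι := ↥Sᶜ) (n - 1) (by omega)
  rwa [Nat.sub_add_cancel hn, hcard, show n - (n - #S) = #S by omega,
    ← card_parkingCriterion_ones_eq (S := S) (by simp)] at this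

lemma card_isPF_ones_eq_sum (n m : ℕ) :
    #{a ∈ Fintype.piFinset fun _ : Fin n => Icc 1 n | IsPF n a ∧ #{i | a i = 1} = m}
      = ∑ S ∈ powersetCard m univ, #{a ∈ Fintype.piFinset fun _ : Fin n => Icc 1 n |
          ParkingCriterion n a ∧ ({i | a i = 1} : Finset (Fin n)) = S} := by
  rw [card_eq_sum_card_fiberwise (f := fun a : Fin n → ℕ => ({i | a i = 1} : Finset (Fin n)))
    (t := powersetCard m univ)
    fun a ha => mem_powersetCard.2 ⟨subset_univ _, (mem_filter.1 ha).2.2⟩]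
  refine sum_congr rfl fun S hS => congrArg card ?_
  rw [filter_filter]
  refine filter_congr fun a ha => ?_
  rw [IsPF, NaplesPF, allPark_iff_parkingCriterion (Fintype.mem_piFinset.1 ha)]
  exact ⟨fun ⟨⟨h, _⟩, hS'⟩ => ⟨h, hS'⟩,
    fun ⟨h, hS'⟩ => ⟨⟨h, hS' ▸ (mem_powersetCard.1 hS).2⟩, hS'⟩⟩

/-- for `n ≥ m ≥ 1`, the number of parking functions of length `n`
with exactly `m` entries equal to `1` is `C(n−1,m−1)·n^{n−m}`. -/
theorem statement2 (n m : ℕ) (hm : 1 ≤ m) (hmn : m ≤ n) :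
    ((Fintype.piFinset fun _ : Fin n => Finset.Icc 1 n).filter
        (fun a => IsPF n a ∧ (Finset.univ.filter (fun i => a i = 1)).card = m)).card
      = Nat.choose (n - 1) (m - 1) * n ^ (n - m) := by
  refine Nat.eq_of_mul_eq_mul_right (hm.trans hmn) ?_
  rw [card_isPF_ones_eq_sum, sum_mul,
    sum_congr rfl fun S hS => by rw [card_parkingCriterion_ones_mul, (mem_powersetCard.1 hS).2],
    sum_const, card_powersetCard, card_univ, Fintype.card_fin, smul_eq_mul]
  obtain ⟨n, rfl⟩ : ∃ n', n = n' + 1 := ⟨n - 1, by omega⟩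
  obtain ⟨m, rfl⟩ : ∃ m', m = m' + 1 := ⟨m - 1, by omega⟩
  simp only [Nat.add_sub_cancel, Nat.add_sub_add_right]
  linear_combination (n + 1) ^ (n - m) * (Nat.add_one_mul_choose_eq n m).symm
end

section
/- Let n ≥ k ≥ 1. Then the number of k-Naples parking functions satisfies the recursion |PF_{n+1,k}| = Σ_{i=0}^{n} binom(n, i) · min(i+1+k, n+1) · |PF_{i,k}| · |PF_{n−i}|, where |PF_{n−i}| = (n−i+1)^{n−i−1} is the number of standard parking functions of length n−i (with |PF_0| = |PF_{0,k}| = 1 by convention). -/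
open Finset

/-- `|PF_{n,k}|`: the number of `k`-Naples parking functions of length `n`. -/
def numNaplesPF (n k : ℕ) : ℕ :=
  ((Fintype.piFinset fun _ : Fin n => Finset.Icc 1 n).filter (fun a => NaplesPF n k a)).card

namespace PFaux

/-! ### Basic facts about `parkSpot` and `occUpTo` -/

lemma parkSpot_of_not_mem {n : ℕ} {occ : Finset ℕ} {p r : ℕ} (h : p ∉ occ) :
    parkSpot n occ p r = some p := by
  unfold parkSpot; rw [if_neg h]

lemma parkSpot_spec {n : ℕ} {occ : Finset ℕ} {p r s : ℕ}
    (h : parkSpot n occ p r = some s) :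
    s ∉ occ ∧ (s = p ∨ (1 ≤ s ∧ s < p) ∨ (p < s ∧ s ≤ n)) := by
  unfold parkSpot at h
  split_ifs at h with h1 h2 h3
  · -- backup
    have hmem := Finset.max'_mem _ h2
    rw [Option.some_inj] at h
    subst h
    simp only [Finset.mem_filter, Finset.mem_Ico] at hmem
    exact ⟨hmem.2, Or.inr (Or.inl ⟨le_trans (le_max_left 1 _) hmem.1.1, hmem.1.2⟩)⟩
  · have hmem := Finset.min'_mem _ h3
    rw [Option.some_inj] at h
    subst h
    simp only [Finset.mem_filter, Finset.mem_Ioc] at hmem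
    exact ⟨hmem.2, Or.inr (Or.inr hmem.1)⟩
  · rw [Option.some_inj] at h; subst h; exact ⟨h1, Or.inl rfl⟩

lemma parkSpot_not_mem {n : ℕ} {occ : Finset ℕ} {p r s : ℕ}
    (h : parkSpot n occ p r = some s) : s ∉ occ := (parkSpot_spec h).1

lemma parkSpot_mem_Icc {n : ℕ} {occ : Finset ℕ} {p r s : ℕ} (hp : p ∈ Finset.Icc 1 n)
    (h : parkSpot n occ p r = some s) : s ∈ Finset.Icc 1 n := by
  simp only [Finset.mem_Icc] at hp ⊢
  rcases (parkSpot_spec h).2 with h | ⟨h1, h2⟩ | ⟨h1, h2⟩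
  · omega
  · omega
  · omega

lemma occUpTo_succ_of_lt {n m : ℕ} (a r : Fin m → ℕ) {t : ℕ} (h : t < m) :
    occUpTo n m a r (t + 1) =
      match parkSpot n (occUpTo n m a r t) (a ⟨t, h⟩) (r ⟨t, h⟩) with
      | some s => insert s (occUpTo n m a r t)
      | none => occUpTo n m a r t := by
  conv_lhs => rw [occUpTo]
  simp only [dif_pos h]

lemma occUpTo_succ_some {n m : ℕ} {a r : Fin m → ℕ} {t s : ℕ} (h : t < m)
    (hs : parkSpot n (occUpTo n m a r t) (a ⟨t, h⟩) (r ⟨t, h⟩) = some s) :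
    occUpTo n m a r (t + 1) = insert s (occUpTo n m a r t) := by
  rw [occUpTo_succ_of_lt a r h, hs]

lemma occUpTo_succ_isSome {n m : ℕ} {a r : Fin m → ℕ} {t : ℕ} (h : t < m)
    (hs : (parkSpot n (occUpTo n m a r t) (a ⟨t, h⟩) (r ⟨t, h⟩)).isSome) :
    occUpTo n m a r (t + 1) =
      insert ((parkSpot n (occUpTo n m a r t) (a ⟨t, h⟩) (r ⟨t, h⟩)).get hs)
        (occUpTo n m a r t) := by
  exact occUpTo_succ_some h (Option.eq_some_of_isSome hs)

lemma subset_occUpTo_succ {n m : ℕ} (a r : Fin m → ℕ) (t : ℕ) :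
    occUpTo n m a r t ⊆ occUpTo n m a r (t + 1) := by
  by_cases h : t < m
  · cases hps : parkSpot n (occUpTo n m a r t) (a ⟨t, h⟩) (r ⟨t, h⟩) with
    | none => rw [occUpTo_succ_of_lt a r h, hps]
    | some s => rw [occUpTo_succ_of_lt a r h, hps]; exact Finset.subset_insert _ _
  · rw [occUpTo]; simp [h]

lemma occUpTo_mono {n m : ℕ} (a r : Fin m → ℕ) {t t' : ℕ} (h : t ≤ t') :
    occUpTo n m a r t ⊆ occUpTo n m a r t' := by
  induction t' with
  | zero => simp_all
  | succ u ih =>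
    rcases Nat.lt_or_ge t (u+1) with h' | h'
    · exact (ih (by omega)).trans (subset_occUpTo_succ a r u)
    · have : t = u + 1 := by omega
      subst this; exact subset_rfl

lemma occUpTo_subset_Icc {n m : ℕ} {a : Fin m → ℕ} (r : Fin m → ℕ)
    (hv : ∀ j, a j ∈ Finset.Icc 1 n) (t : ℕ) :
    occUpTo n m a r t ⊆ Finset.Icc 1 n := by
  induction t with
  | zero => simp [occUpTo]
  | succ u ih =>
    by_cases h : u < m
    · cases hps : parkSpot n (occUpTo n m a r u) (a ⟨u, h⟩) (r ⟨u, h⟩) with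
      | none => rw [occUpTo_succ_of_lt a r h, hps]; exact ih
      | some s =>
        rw [occUpTo_succ_of_lt a r h, hps]
        exact Finset.insert_subset (parkSpot_mem_Icc (hv _) hps) ih
    · rw [occUpTo]; simp [h]; exact ih

lemma card_occUpTo {n m : ℕ} {a r : Fin m → ℕ} {t : ℕ} (ht : t ≤ m)
    (hall : ∀ j : Fin m, (j : ℕ) < t → (outcome n m a r j).isSome) :
    (occUpTo n m a r t).card = t := by
  induction t with
  | zero => simp [occUpTo]
  | succ u ih =>
    have hu : u < m := ht
    have hsome := hall ⟨u, hu⟩ (by simp)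
    unfold outcome at hsome
    obtain ⟨s, hs⟩ := Option.isSome_iff_exists.mp hsome
    rw [occUpTo_succ_some hu hs,
      Finset.card_insert_of_notMem (parkSpot_not_mem hs),
      ih (by omega) (fun j hj => hall j (by omega))]

/-- Removing the last car does not change the simulation of the earlier cars. -/
lemma occUpTo_castSucc {n m : ℕ} (a r : Fin (m+1) → ℕ) {t : ℕ} (ht : t ≤ m) :
    occUpTo n (m+1) a r t =
      occUpTo n m (fun j => a j.castSucc) (fun j => r j.castSucc) t := by
  induction t with
  | zero => simp [occUpTo]
  | succ u ih =>
    have hu : u < m := ht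
    rw [occUpTo, occUpTo]
    simp only [dif_pos (show u < m + 1 by omega), dif_pos hu, ih (le_of_lt hu)]
    rfl

end PFaux
namespace PFaux

/-! ### Characterization lemmas for `parkSpot` -/

lemma parkSpot_of_backup {n : ℕ} {occ : Finset ℕ} {p r : ℕ} (hp : p ∈ occ)
    (hb : ((Finset.Ico (max 1 (p - r)) p).filter (fun j => j ∉ occ)).Nonempty) :
    parkSpot n occ p r =
      some (((Finset.Ico (max 1 (p - r)) p).filter (fun j => j ∉ occ)).max' hb) := by
  unfold parkSpot; rw [if_pos hp, dif_pos hb]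

lemma parkSpot_of_forward {n : ℕ} {occ : Finset ℕ} {p r : ℕ} (hp : p ∈ occ)
    (hb : ¬ ((Finset.Ico (max 1 (p - r)) p).filter (fun j => j ∉ occ)).Nonempty)
    (hf : ((Finset.Ioc p n).filter (fun j => j ∉ occ)).Nonempty) :
    parkSpot n occ p r =
      some (((Finset.Ioc p n).filter (fun j => j ∉ occ)).min' hf) := by
  unfold parkSpot; rw [if_pos hp, dif_neg hb, dif_pos hf]

lemma parkSpot_of_fail {n : ℕ} {occ : Finset ℕ} {p r : ℕ} (hp : p ∈ occ)
    (hb : ¬ ((Finset.Ico (max 1 (p - r)) p).filter (fun j => j ∉ occ)).Nonempty)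
    (hf : ¬ ((Finset.Ioc p n).filter (fun j => j ∉ occ)).Nonempty) :
    parkSpot n occ p r = none := by
  unfold parkSpot; rw [if_pos hp, dif_neg hb, dif_neg hf]

lemma max'_congr {S T : Finset ℕ} (h : S = T) (hS : S.Nonempty) :
    S.max' hS = T.max' (h ▸ hS) := by subst h; rfl

lemma min'_congr {S T : Finset ℕ} (h : S = T) (hS : S.Nonempty) :
    S.min' hS = T.min' (h ▸ hS) := by subst h; rfl

lemma mem_image_add {S : Finset ℕ} {y i : ℕ} :
    y ∈ S.image (· + i) ↔ i ≤ y ∧ y - i ∈ S := by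
  simp only [Finset.mem_image]
  constructor
  · rintro ⟨x, hx, rfl⟩; exact ⟨by omega, by simpa using hx⟩
  · rintro ⟨h1, h2⟩; exact ⟨y - i, h2, by omega⟩

lemma max'_image_add {S : Finset ℕ} {i : ℕ} (hS : S.Nonempty) :
    (S.image (· + i)).max' (hS.image (· + i)) = S.max' hS + i := by
  apply le_antisymm
  · apply Finset.max'_le
    intro y hy
    rw [mem_image_add] at hy
    have := Finset.le_max' S _ hy.2
    omega
  · exact Finset.le_max' _ _ (Finset.mem_image_of_mem (· + i) (Finset.max'_mem S hS))

lemma min'_image_add {S : Finset ℕ} {i : ℕ} (hS : S.Nonempty) :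
    (S.image (· + i)).min' (hS.image (· + i)) = S.min' hS + i := by
  apply le_antisymm
  · exact Finset.min'_le _ _ (Finset.mem_image_of_mem (· + i) (Finset.min'_mem S hS))
  · apply Finset.le_min'
    intro y hy
    rw [mem_image_add] at hy
    have := Finset.min'_le S _ hy.2
    omega

/-! ### Step lemmas for the split simulation -/

section Split
variable {i m k : ℕ} {occL occR : Finset ℕ}
  (hL : occL ⊆ Finset.Icc 1 i) (hR : occR ⊆ Finset.Icc 2 (m + 1))

include hL hR

lemma mem_union_left_iff {p : ℕ} (hp : p ≤ i) :
    (p ∈ occL ∪ occR.image (· + i)) ↔ p ∈ occL := by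
  simp only [Finset.mem_union, mem_image_add]
  constructor
  · rintro (h | ⟨h1, h2⟩)
    · exact h
    · have := hR h2; simp only [Finset.mem_Icc] at this; omega
  · exact Or.inl

lemma mem_union_right_iff {p : ℕ} (hp : i + 1 ≤ p) :
    (p ∈ occL ∪ occR.image (· + i)) ↔ p - i ∈ occR := by
  simp only [Finset.mem_union, mem_image_add]
  constructor
  · rintro (h | ⟨h1, h2⟩)
    · have := hL h; simp only [Finset.mem_Icc] at this; omega
    · exact h2
  · intro h; exact Or.inr ⟨by omega, h⟩

lemma gap_not_mem_union : i + 1 ∉ occL ∪ occR.image (· + i) := by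
  rw [mem_union_right_iff hL hR le_rfl]
  intro h
  have := hR h; simp only [Finset.mem_Icc] at this; omega

lemma stepL_window_eq {p : ℕ} (hp : p ≤ i) :
    (Finset.Ico (max 1 (p - k)) p).filter (fun j => j ∉ occL ∪ occR.image (· + i))
      = (Finset.Ico (max 1 (p - k)) p).filter (fun j => j ∉ occL) := by
  apply Finset.filter_congr
  intro j hj
  simp only [Finset.mem_Ico] at hj
  have hji : j ≤ i := by omega
  exact not_congr (mem_union_left_iff hL hR hji)

lemma stepL_some {p s : ℕ} (hp1 : 1 ≤ p) (hp : p ≤ i)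
    (hs : parkSpot i occL p k = some s) :
    parkSpot (i + m + 1) (occL ∪ occR.image (· + i)) p k = some s := by
  by_cases hpm : p ∈ occL
  · have hpm' : p ∈ occL ∪ occR.image (· + i) := Finset.mem_union_left _ hpm
    unfold parkSpot at hs
    rw [if_pos hpm] at hs
    split_ifs at hs with hb hf
    · -- backup in the sub-simulation
      have hb' : ((Finset.Ico (max 1 (p - k)) p).filter
          (fun j => j ∉ occL ∪ occR.image (· + i))).Nonempty := by
        rw [stepL_window_eq hL hR hp]; exact hb
      rw [parkSpot_of_backup hpm' hb', Option.some_inj]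
      rw [max'_congr (stepL_window_eq hL hR hp)]
      rw [Option.some_inj] at hs
      exact hs
    · -- forward in the sub-simulation
      have hb' : ¬ ((Finset.Ico (max 1 (p - k)) p).filter
          (fun j => j ∉ occL ∪ occR.image (· + i))).Nonempty := by
        rw [stepL_window_eq hL hR hp]; exact hb
      rw [Option.some_inj] at hs
      have hsmem := Finset.min'_mem _ hf
      rw [hs] at hsmem
      simp only [Finset.mem_filter, Finset.mem_Ioc] at hsmem
      have hf' : ((Finset.Ioc p (i + m + 1)).filter
          (fun j => j ∉ occL ∪ occR.image (· + i))).Nonempty := by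
        refine ⟨s, ?_⟩
        simp only [Finset.mem_filter, Finset.mem_Ioc,
          mem_union_left_iff hL hR (le_trans hsmem.1.2 (le_refl i))]
        exact ⟨⟨hsmem.1.1, by omega⟩, hsmem.2⟩
      rw [parkSpot_of_forward hpm' hb' hf', Option.some_inj]
      apply le_antisymm
      · apply Finset.min'_le
        simp only [Finset.mem_filter, Finset.mem_Ioc,
          mem_union_left_iff hL hR hsmem.1.2]
        exact ⟨⟨hsmem.1.1, by omega⟩, hsmem.2⟩
      · apply Finset.le_min'
        intro y hy
        simp only [Finset.mem_filter, Finset.mem_Ioc] at hy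
        by_contra hlt
        push_neg at hlt
        have hyi : y ≤ i := by omega
        have : y ∈ (Finset.Ioc p i).filter (fun j => j ∉ occL) := by
          simp only [Finset.mem_filter, Finset.mem_Ioc]
          refine ⟨⟨hy.1.1, hyi⟩, ?_⟩
          rw [← mem_union_left_iff hL hR hyi]
          exact hy.2
        have := Finset.min'_le _ _ this
        rw [hs] at this
        omega
  · rw [parkSpot_of_not_mem hpm] at hs
    rw [Option.some_inj] at hs
    subst hs
    exact parkSpot_of_not_mem (by rw [mem_union_left_iff hL hR hp]; exact hpm)

lemma stepL_none {p : ℕ} (hp1 : 1 ≤ p) (hp : p ≤ i)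
    (hs : parkSpot i occL p k = none) :
    parkSpot (i + m + 1) (occL ∪ occR.image (· + i)) p k = some (i + 1) := by
  have hpm : p ∈ occL := by
    by_contra hpm
    rw [parkSpot_of_not_mem hpm] at hs
    exact Option.some_ne_none _ hs
  have hpm' : p ∈ occL ∪ occR.image (· + i) := Finset.mem_union_left _ hpm
  have hb : ¬ ((Finset.Ico (max 1 (p - k)) p).filter (fun j => j ∉ occL)).Nonempty := by
    intro hb
    rw [parkSpot_of_backup hpm hb] at hs
    exact Option.some_ne_none _ hs
  have hf : ¬ ((Finset.Ioc p i).filter (fun j => j ∉ occL)).Nonempty := by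
    intro hf
    rw [parkSpot_of_forward hpm hb hf] at hs
    exact Option.some_ne_none _ hs
  · have hb' : ¬ ((Finset.Ico (max 1 (p - k)) p).filter
        (fun j => j ∉ occL ∪ occR.image (· + i))).Nonempty := by
      rw [stepL_window_eq hL hR hp]; exact hb
    have hf' : ((Finset.Ioc p (i + m + 1)).filter
        (fun j => j ∉ occL ∪ occR.image (· + i))).Nonempty := by
      refine ⟨i + 1, ?_⟩
      simp only [Finset.mem_filter, Finset.mem_Ioc]
      exact ⟨⟨by omega, by omega⟩, gap_not_mem_union hL hR⟩
    rw [parkSpot_of_forward hpm' hb' hf', Option.some_inj]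
    apply le_antisymm
    · apply Finset.min'_le
      simp only [Finset.mem_filter, Finset.mem_Ioc]
      exact ⟨⟨by omega, by omega⟩, gap_not_mem_union hL hR⟩
    · apply Finset.le_min'
      intro y hy
      simp only [Finset.mem_filter, Finset.mem_Ioc] at hy
      by_contra hlt
      push_neg at hlt
      have hyi : y ≤ i := by omega
      have : y ∈ (Finset.Ioc p i).filter (fun j => j ∉ occL) := by
        simp only [Finset.mem_filter, Finset.mem_Ioc]
        refine ⟨⟨hy.1.1, hyi⟩, ?_⟩
        rw [← mem_union_left_iff hL hR hyi]
        exact hy.2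
      exact hf ⟨y, this⟩

lemma stepR {p : ℕ} (hp1 : 2 ≤ p) (hp : p ≤ m + 1) :
    parkSpot (i + m + 1) (occL ∪ occR.image (· + i)) (p + i) k =
      (parkSpot (m + 1) occR p k).map (· + i) := by
  have hmem : (p + i ∈ occL ∪ occR.image (· + i)) ↔ p ∈ occR := by
    rw [mem_union_right_iff hL hR (by omega)]
    simp
  by_cases hpm : p ∈ occR
  swap
  · rw [parkSpot_of_not_mem hpm, parkSpot_of_not_mem (by rw [hmem]; exact hpm)]
    rfl
  have hpm' : (p + i) ∈ occL ∪ occR.image (· + i) := hmem.mpr hpm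
  -- relate the backup windows
  by_cases hdip : p ≤ k + 1
  · -- the window dips to the bottom on both sides
    have h1sub : (1 : ℕ) ∈ (Finset.Ico (max 1 (p - k)) p).filter (fun j => j ∉ occR) := by
      simp only [Finset.mem_filter, Finset.mem_Ico]
      refine ⟨⟨by omega, by omega⟩, fun h => ?_⟩
      have := hR h; simp only [Finset.mem_Icc] at this; omega
    have hgbig : (i + 1) ∈ (Finset.Ico (max 1 (p + i - k)) (p + i)).filter
        (fun j => j ∉ occL ∪ occR.image (· + i)) := by
      simp only [Finset.mem_filter, Finset.mem_Ico]
      exact ⟨⟨by omega, by omega⟩, gap_not_mem_union hL hR⟩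
    have hbsub : ((Finset.Ico (max 1 (p - k)) p).filter (fun j => j ∉ occR)).Nonempty :=
      ⟨1, h1sub⟩
    have hbbig : ((Finset.Ico (max 1 (p + i - k)) (p + i)).filter
        (fun j => j ∉ occL ∪ occR.image (· + i))).Nonempty := ⟨_, hgbig⟩
    rw [parkSpot_of_backup hpm hbsub, parkSpot_of_backup hpm' hbbig]
    simp only [Option.map_some]
    rw [Option.some_inj]
    set x := ((Finset.Ico (max 1 (p - k)) p).filter (fun j => j ∉ occR)).max' hbsub with hx
    have hxmem := Finset.max'_mem _ hbsub
    rw [← hx] at hxmem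
    simp only [Finset.mem_filter, Finset.mem_Ico] at hxmem
    apply le_antisymm
    · apply Finset.max'_le
      intro y hy
      simp only [Finset.mem_filter, Finset.mem_Ico] at hy
      rcases Nat.lt_or_ge y (i + 1) with h' | h'
      · have : x ≥ 1 := hxmem.1.1.trans' (le_max_left 1 _) |>.trans' (le_refl _)
        omega
      · have hyR : y - i ∈ (Finset.Ico (max 1 (p - k)) p).filter (fun j => j ∉ occR) := by
          simp only [Finset.mem_filter, Finset.mem_Ico]
          refine ⟨⟨by omega, by omega⟩, ?_⟩
          rw [← mem_union_right_iff hL hR h'] at *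
          exact hy.2
        have := Finset.le_max' _ _ hyR
        rw [← hx] at this
        omega
    · apply Finset.le_max'
      simp only [Finset.mem_filter, Finset.mem_Ico]
      refine ⟨⟨by omega, by omega⟩, ?_⟩
      rw [mem_union_right_iff hL hR (by omega)]
      simpa using hxmem.2
  · -- no dipping : the windows correspond exactly
    have hWeq : (Finset.Ico (max 1 (p + i - k)) (p + i)).filter
        (fun j => j ∉ occL ∪ occR.image (· + i)) =
        ((Finset.Ico (max 1 (p - k)) p).filter (fun j => j ∉ occR)).image (· + i) := by
      ext y
      simp only [Finset.mem_filter, Finset.mem_Ico, mem_image_add]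
      constructor
      · rintro ⟨⟨hy1, hy2⟩, hy3⟩
        have hyi : i + 1 ≤ y := by omega
        refine ⟨by omega, ⟨by omega, by omega⟩, ?_⟩
        rw [← mem_union_right_iff hL hR hyi]; exact hy3
      · rintro ⟨hyi, ⟨hy1, hy2⟩, hy3⟩
        refine ⟨⟨by omega, by omega⟩, ?_⟩
        rw [mem_union_right_iff hL hR (by omega)]
        have : y - i ≥ max 1 (p-k) := hy1
        exact hy3
    by_cases hbsub : ((Finset.Ico (max 1 (p - k)) p).filter (fun j => j ∉ occR)).Nonempty
    · have hbbig : ((Finset.Ico (max 1 (p + i - k)) (p + i)).filter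
          (fun j => j ∉ occL ∪ occR.image (· + i))).Nonempty := by
        rw [hWeq]; exact hbsub.image _
      rw [parkSpot_of_backup hpm hbsub, parkSpot_of_backup hpm' hbbig]
      simp only [Option.map_some, Option.some_inj]
      rw [max'_congr hWeq, max'_image_add hbsub]
    · have hbbig : ¬ ((Finset.Ico (max 1 (p + i - k)) (p + i)).filter
          (fun j => j ∉ occL ∪ occR.image (· + i))).Nonempty := by
        rw [hWeq]
        intro h
        obtain ⟨y, hy⟩ := h
        rw [mem_image_add] at hy
        exact hbsub ⟨y - i, hy.2⟩
      -- forward sets correspond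
      have hFeq : (Finset.Ioc (p + i) (i + m + 1)).filter
          (fun j => j ∉ occL ∪ occR.image (· + i)) =
          ((Finset.Ioc p (m + 1)).filter (fun j => j ∉ occR)).image (· + i) := by
        ext y
        simp only [Finset.mem_filter, Finset.mem_Ioc, mem_image_add]
        constructor
        · rintro ⟨⟨hy1, hy2⟩, hy3⟩
          refine ⟨by omega, ⟨by omega, by omega⟩, ?_⟩
          rw [← mem_union_right_iff hL hR (by omega)]; exact hy3
        · rintro ⟨hyi, ⟨hy1, hy2⟩, hy3⟩
          refine ⟨⟨by omega, by omega⟩, ?_⟩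
          rw [mem_union_right_iff hL hR (by omega)]
          exact hy3
      by_cases hfsub : ((Finset.Ioc p (m + 1)).filter (fun j => j ∉ occR)).Nonempty
      · have hfbig : ((Finset.Ioc (p + i) (i + m + 1)).filter
            (fun j => j ∉ occL ∪ occR.image (· + i))).Nonempty := by
          rw [hFeq]; exact hfsub.image _
        rw [parkSpot_of_forward hpm hbsub hfsub, parkSpot_of_forward hpm' hbbig hfbig]
        simp only [Option.map_some, Option.some_inj]
        rw [min'_congr hFeq, min'_image_add hfsub]
      · have hfbig : ¬ ((Finset.Ioc (p + i) (i + m + 1)).filter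
            (fun j => j ∉ occL ∪ occR.image (· + i))).Nonempty := by
          rw [hFeq]
          intro h
          obtain ⟨y, hy⟩ := h
          rw [mem_image_add] at hy
          exact hfsub ⟨y - i, hy.2⟩
        rw [parkSpot_of_fail hpm hbsub hfsub, parkSpot_of_fail hpm' hbbig hfbig]
        rfl

end Split

/-! ### The last car -/

lemma lastCar_some {N g b k : ℕ} (hg1 : 1 ≤ g) (hgN : g ≤ N) (hb1 : 1 ≤ b) (hbN : b ≤ N)
    (hbk : b ≤ g + k) :
    parkSpot N (Finset.Icc 1 N \ {g}) b k = some g := by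
  have hgocc : g ∉ Finset.Icc 1 N \ {g} := by simp
  rcases Nat.lt_trichotomy b g with h | h | h
  · -- b < g : backup window fully occupied, drive forward to g
    have hbocc : b ∈ Finset.Icc 1 N \ {g} := by
      simp only [Finset.mem_sdiff, Finset.mem_Icc, Finset.mem_singleton]
      omega
    have hbW : ¬ ((Finset.Ico (max 1 (b - k)) b).filter
        (fun j => j ∉ Finset.Icc 1 N \ {g})).Nonempty := by
      rintro ⟨y, hy⟩
      simp only [Finset.mem_filter, Finset.mem_Ico, Finset.mem_sdiff, Finset.mem_Icc,
        Finset.mem_singleton, not_and, not_not] at hy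
      omega
    have hfF : ((Finset.Ioc b N).filter (fun j => j ∉ Finset.Icc 1 N \ {g})).Nonempty := by
      refine ⟨g, ?_⟩
      simp only [Finset.mem_filter, Finset.mem_Ioc]
      exact ⟨⟨h, hgN⟩, hgocc⟩
    rw [parkSpot_of_forward hbocc hbW hfF, Option.some_inj]
    apply le_antisymm
    · apply Finset.min'_le
      simp only [Finset.mem_filter, Finset.mem_Ioc]
      exact ⟨⟨h, hgN⟩, hgocc⟩
    · apply Finset.le_min'
      intro y hy
      simp only [Finset.mem_filter, Finset.mem_Ioc, Finset.mem_sdiff, Finset.mem_Icc,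
        Finset.mem_singleton, not_and, not_not] at hy
      omega
  · subst h
    exact parkSpot_of_not_mem hgocc
  · -- b > g : back up to g
    have hbocc : b ∈ Finset.Icc 1 N \ {g} := by
      simp only [Finset.mem_sdiff, Finset.mem_Icc, Finset.mem_singleton]
      omega
    have hgW : g ∈ (Finset.Ico (max 1 (b - k)) b).filter
        (fun j => j ∉ Finset.Icc 1 N \ {g}) := by
      simp only [Finset.mem_filter, Finset.mem_Ico]
      exact ⟨⟨by omega, h⟩, hgocc⟩
    rw [parkSpot_of_backup hbocc ⟨g, hgW⟩, Option.some_inj]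
    apply le_antisymm
    · apply Finset.max'_le
      intro y hy
      simp only [Finset.mem_filter, Finset.mem_Ico, Finset.mem_sdiff, Finset.mem_Icc,
        Finset.mem_singleton, not_and, not_not] at hy
      omega
    · exact Finset.le_max' _ _ hgW

lemma lastCar_fail {N g b k : ℕ} (hg1 : 1 ≤ g) (hgN : g ≤ N) (hb1 : 1 ≤ b) (hbN : b ≤ N)
    (hbk : g + k < b) :
    parkSpot N (Finset.Icc 1 N \ {g}) b k = none := by
  have hbocc : b ∈ Finset.Icc 1 N \ {g} := by
    simp only [Finset.mem_sdiff, Finset.mem_Icc, Finset.mem_singleton]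
    omega
  have hbW : ¬ ((Finset.Ico (max 1 (b - k)) b).filter
      (fun j => j ∉ Finset.Icc 1 N \ {g})).Nonempty := by
    rintro ⟨y, hy⟩
    simp only [Finset.mem_filter, Finset.mem_Ico, Finset.mem_sdiff, Finset.mem_Icc,
      Finset.mem_singleton, not_and, not_not] at hy
    omega
  have hfF : ¬ ((Finset.Ioc b N).filter (fun j => j ∉ Finset.Icc 1 N \ {g})).Nonempty := by
    rintro ⟨y, hy⟩
    simp only [Finset.mem_filter, Finset.mem_Ioc, Finset.mem_sdiff, Finset.mem_Icc,
      Finset.mem_singleton, not_and, not_not] at hy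
    omega
  exact parkSpot_of_fail hbocc hbW hfF

/-- The full street minus the gap. -/
lemma union_full {i m : ℕ} :
    Finset.Icc 1 i ∪ (Finset.Icc 2 (m + 1)).image (· + i) =
      Finset.Icc 1 (i + m + 1) \ {i + 1} := by
  ext y
  simp only [Finset.mem_union, Finset.mem_Icc, mem_image_add, Finset.mem_sdiff,
    Finset.mem_singleton]
  omega

end PFaux
namespace PFaux

/-! ### Rank/counting lemmas for subsets of `Fin n` -/

/-- number of elements of `S` below `t` -/
def cnt {n : ℕ} (S : Finset (Fin n)) (t : ℕ) : ℕ :=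
  (S.filter (fun x : Fin n => (x : ℕ) < t)).card

lemma cnt_zero {n : ℕ} (S : Finset (Fin n)) : cnt S 0 = 0 := by
  simp [cnt]

lemma cnt_succ_of_mem {n : ℕ} {S : Finset (Fin n)} {t : ℕ} (ht : t < n)
    (h : ⟨t, ht⟩ ∈ S) : cnt S (t + 1) = cnt S t + 1 := by
  unfold cnt
  rw [show S.filter (fun x : Fin n => (x : ℕ) < t + 1)
      = insert ⟨t, ht⟩ (S.filter (fun x : Fin n => (x : ℕ) < t)) by
    ext x
    simp only [Finset.mem_filter, Finset.mem_insert, Fin.ext_iff]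
    constructor
    · rintro ⟨hx1, hx2⟩
      rcases Nat.lt_or_ge (x : ℕ) t with h' | h'
      · exact Or.inr ⟨hx1, h'⟩
      · exact Or.inl (by omega)
    · rintro (rfl | ⟨hx1, hx2⟩)
      · exact ⟨h, by omega⟩
      · exact ⟨hx1, by omega⟩]
  rw [Finset.card_insert_of_notMem (by simp)]

lemma cnt_succ_of_not_mem {n : ℕ} {S : Finset (Fin n)} {t : ℕ} (ht : t < n)
    (h : ⟨t, ht⟩ ∉ S) : cnt S (t + 1) = cnt S t := by
  unfold cnt
  congr 1
  ext x
  simp only [Finset.mem_filter]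
  constructor
  · rintro ⟨hx1, hx2⟩
    refine ⟨hx1, ?_⟩
    rcases Nat.lt_or_ge (x : ℕ) t with h' | h'
    · exact h'
    · exfalso
      have hxt : (x : ℕ) = t := by omega
      apply h
      have hx : (⟨t, ht⟩ : Fin n) = x := Fin.ext (by simp [hxt])
      rwa [hx]
  · rintro ⟨hx1, hx2⟩
    exact ⟨hx1, by omega⟩

lemma cnt_full {n : ℕ} (S : Finset (Fin n)) : cnt S n = S.card := by
  unfold cnt
  congr 1
  apply Finset.filter_true_of_mem
  intro x _
  exact x.isLt

lemma cnt_le_card {n : ℕ} (S : Finset (Fin n)) (t : ℕ) : cnt S t ≤ S.card :=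
  Finset.card_le_card (Finset.filter_subset _ _)

lemma cnt_lt_card_of_mem {n : ℕ} {S : Finset (Fin n)} {t : ℕ} (ht : t < n)
    (h : ⟨t, ht⟩ ∈ S) : cnt S t < S.card := by
  have : cnt S (t+1) ≤ S.card := cnt_le_card S (t+1)
  rw [cnt_succ_of_mem ht h] at this
  omega

/-- The rank lemma: the inverse of `orderIsoOfFin` sends `j ∈ S` to the number of
elements of `S` strictly below `j`. -/
lemma orderIsoOfFin_symm_rank {n c : ℕ} (S : Finset (Fin n)) (hc : S.card = c)
    {j : Fin n} (hj : j ∈ S) :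
    (((S.orderIsoOfFin hc).symm ⟨j, hj⟩ : Fin c) : ℕ) = cnt S (j : ℕ) := by
  set e := S.orderIsoOfFin hc with he
  set q := e.symm ⟨j, hj⟩ with hq
  have hej : e q = ⟨j, hj⟩ := by rw [hq, OrderIso.apply_symm_apply]
  have hset : S.filter (fun x : Fin n => (x : ℕ) < (j : ℕ))
      = (Finset.Iio q).image (fun p => ((e p : S) : Fin n)) := by
    ext x
    simp only [Finset.mem_filter, Finset.mem_image, Finset.mem_Iio]
    constructor
    · rintro ⟨hx1, hx2⟩
      refine ⟨e.symm ⟨x, hx1⟩, ?_, by rw [OrderIso.apply_symm_apply]⟩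
      rw [hq]
      rw [e.symm.lt_iff_lt]
      exact Subtype.mk_lt_mk.mpr (Fin.lt_def.mpr hx2)
    · rintro ⟨p, hp, rfl⟩
      refine ⟨(e p).2, ?_⟩
      have : e p < e q := e.lt_iff_lt.mpr hp
      rw [hej] at this
      exact Fin.lt_def.mp (Subtype.mk_lt_mk.mp this)
  unfold cnt
  rw [hset, Finset.card_image_of_injective _
    (fun p p' hpp => e.injective (Subtype.ext hpp)), Fin.card_Iio]

lemma orderIsoOfFin_apply_rank {n c : ℕ} (S : Finset (Fin n)) (hc : S.card = c)
    (q : Fin c) : cnt S ((S.orderIsoOfFin hc q : Fin n) : ℕ) = (q : ℕ) := by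
  have := orderIsoOfFin_symm_rank S hc (j := (S.orderIsoOfFin hc q : Fin n))
    (S.orderIsoOfFin hc q).2
  rw [← this]
  congr 1
  rw [← Subtype.coe_eta (S.orderIsoOfFin hc q) (S.orderIsoOfFin hc q).2,
    OrderIso.symm_apply_apply]

lemma cnt_add_cnt_compl {n : ℕ} (S : Finset (Fin n)) (t : ℕ) (ht : t ≤ n) :
    cnt S t + cnt Sᶜ t = t := by
  unfold cnt
  rw [← Finset.card_union_of_disjoint]
  · rw [show S.filter (fun x : Fin n => (x : ℕ) < t) ∪ Sᶜ.filter (fun x : Fin n => (x : ℕ) < t)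
        = Finset.univ.filter (fun x : Fin n => (x : ℕ) < t) by
      ext x
      simp only [Finset.mem_union, Finset.mem_filter, Finset.mem_compl, Finset.mem_univ, true_and]
      tauto]
    apply Finset.card_eq_of_bijective (fun r hr => ⟨r, by omega⟩)
    · intro x hx
      simp only [Finset.mem_filter, Finset.mem_univ, true_and] at hx
      exact ⟨(x : ℕ), hx, rfl⟩
    · intro r hr
      simp only [Finset.mem_filter, Finset.mem_univ, true_and]
      exact hr
    · intro r r' hr hr' h
      exact Fin.mk.inj_iff.mp h
  · exact Finset.disjoint_filter_filter disjoint_compl_right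

end PFaux
namespace PFaux

/-! ### Merging a left and a right parking sequence -/

def mergePref (i m : ℕ) (aL : Fin i → ℕ) (aR : Fin m → ℕ) (S : Finset (Fin (i + m)))
    (hS : S.card = i) (hSc : Sᶜ.card = m) : Fin (i + m) → ℕ :=
  fun j => if hj : j ∈ S then aL ((S.orderIsoOfFin hS).symm ⟨j, hj⟩)
    else aR ((Sᶜ.orderIsoOfFin hSc).symm ⟨j, Finset.mem_compl.mpr hj⟩) + i

section MergeDir

variable {i m k : ℕ} {aL : Fin i → ℕ} {aR : Fin m → ℕ} {S : Finset (Fin (i + m))}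

lemma occR_subset (hRv : ∀ q, aR q ∈ Finset.Icc 2 (m + 1))
    (hR1 : (1 : ℕ) ∉ occUpTo (m + 1) m aR (fun _ => k) m) {u : ℕ} (hu : u ≤ m) :
    occUpTo (m + 1) m aR (fun _ => k) u ⊆ Finset.Icc 2 (m + 1) := by
  intro x hx
  have h1 : x ∈ Finset.Icc 1 (m + 1) := by
    refine occUpTo_subset_Icc _ (fun q => ?_) u hx
    have := hRv q; simp only [Finset.mem_Icc] at *; omega
  have h2 : x ≠ 1 := by
    rintro rfl
    exact hR1 (occUpTo_mono _ _ hu hx)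
  simp only [Finset.mem_Icc] at *; omega

lemma merge_invariant (hS : S.card = i) (hSc : Sᶜ.card = m)
    (hLv : ∀ q, aL q ∈ Finset.Icc 1 i) (hRv : ∀ q, aR q ∈ Finset.Icc 2 (m + 1))
    (hL : AllPark i i aL (fun _ => k)) (hR : AllPark (m + 1) m aR (fun _ => k))
    (hR1 : (1 : ℕ) ∉ occUpTo (m + 1) m aR (fun _ => k) m) :
    ∀ t, t ≤ i + m →
      (occUpTo (i + m + 1) (i + m) (mergePref i m aL aR S hS hSc) (fun _ => k) t
        = occUpTo i i aL (fun _ => k) (cnt S t) ∪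
          (occUpTo (m + 1) m aR (fun _ => k) (cnt Sᶜ t)).image (· + i)) ∧
      (∀ j : Fin (i + m), (j : ℕ) < t →
        (outcome (i + m + 1) (i + m) (mergePref i m aL aR S hS hSc) (fun _ => k) j).isSome) := by
  set A := mergePref i m aL aR S hS hSc with hA
  intro t
  induction t with
  | zero =>
    intro _
    refine ⟨by simp [occUpTo, cnt_zero], by omega⟩
  | succ t ih =>
    intro ht1
    have ht' : t < i + m := ht1
    obtain ⟨ihocc, ihsome⟩ := ih (by omega)
    have hsubL : occUpTo i i aL (fun _ => k) (cnt S t) ⊆ Finset.Icc 1 i :=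
      occUpTo_subset_Icc _ hLv _
    have hcntc : cnt Sᶜ t ≤ m := by
      have := cnt_le_card Sᶜ t; omega
    have hsubR : occUpTo (m + 1) m aR (fun _ => k) (cnt Sᶜ t) ⊆ Finset.Icc 2 (m + 1) :=
      occR_subset hRv hR1 hcntc
    by_cases hjS : (⟨t, ht'⟩ : Fin (i + m)) ∈ S
    · -- left car
      set q := (S.orderIsoOfFin hS).symm ⟨⟨t, ht'⟩, hjS⟩ with hqdef
      have hqv : (q : ℕ) = cnt S t := by
        rw [hqdef, orderIsoOfFin_symm_rank S hS hjS]
      have hAj : A ⟨t, ht'⟩ = aL q := by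
        rw [hA]; unfold mergePref; rw [dif_pos hjS]
      have hLq := hL q
      unfold outcome at hLq
      rw [hqv] at hLq
      obtain ⟨s, hs⟩ := Option.isSome_iff_exists.mp hLq
      have hbig : parkSpot (i + m + 1)
          (occUpTo i i aL (fun _ => k) (cnt S t) ∪
            (occUpTo (m + 1) m aR (fun _ => k) (cnt Sᶜ t)).image (· + i)) (aL q) k
          = some s := by
        have hq1 := hLv q
        simp only [Finset.mem_Icc] at hq1
        exact stepL_some hsubL hsubR hq1.1 hq1.2 hs
      have hbig' : parkSpot (i + m + 1) (occUpTo (i + m + 1) (i + m) A (fun _ => k) t)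
          (A ⟨t, ht'⟩) k = some s := by
        rw [ihocc, hAj]; exact hbig
      have hnew : occUpTo (i + m + 1) (i + m) A (fun _ => k) (t + 1)
          = insert s (occUpTo (i + m + 1) (i + m) A (fun _ => k) t) :=
        occUpTo_succ_some ht' hbig'
      have hqlt : cnt S t < i := by
        have := q.isLt; omega
      have hLnew : occUpTo i i aL (fun _ => k) (cnt S t + 1)
          = insert s (occUpTo i i aL (fun _ => k) (cnt S t)) := by
        refine occUpTo_succ_some hqlt ?_
        have : (⟨cnt S t, hqlt⟩ : Fin i) = q := Fin.ext (by simp [hqv])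
        rw [this]
        exact hs
      constructor
      · rw [hnew, ihocc, cnt_succ_of_mem ht' hjS,
          cnt_succ_of_not_mem ht' (by simp [hjS]), hLnew, Finset.insert_union]
      · intro j hj
        rcases Nat.lt_or_ge (j : ℕ) t with h' | h'
        · exact ihsome j h'
        · have hjt : (j : ℕ) = t := by omega
          have : j = ⟨t, ht'⟩ := Fin.ext hjt
          subst this
          unfold outcome
          rw [hbig']
          rfl
    · -- right car
      have hjSc : (⟨t, ht'⟩ : Fin (i + m)) ∈ Sᶜ := Finset.mem_compl.mpr hjS
      set q := (Sᶜ.orderIsoOfFin hSc).symm ⟨⟨t, ht'⟩, hjSc⟩ with hqdef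
      have hqv : (q : ℕ) = cnt Sᶜ t := by
        rw [hqdef, orderIsoOfFin_symm_rank Sᶜ hSc hjSc]
      have hAj : A ⟨t, ht'⟩ = aR q + i := by
        rw [hA]; unfold mergePref; rw [dif_neg hjS]
      have hRq := hR q
      unfold outcome at hRq
      rw [hqv] at hRq
      obtain ⟨s, hs⟩ := Option.isSome_iff_exists.mp hRq
      have hq1 := hRv q
      simp only [Finset.mem_Icc] at hq1
      have hbig : parkSpot (i + m + 1)
          (occUpTo i i aL (fun _ => k) (cnt S t) ∪
            (occUpTo (m + 1) m aR (fun _ => k) (cnt Sᶜ t)).image (· + i)) (aR q + i) k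
          = some (s + i) := by
        rw [stepR hsubL hsubR hq1.1 hq1.2, hs]
        rfl
      have hbig' : parkSpot (i + m + 1) (occUpTo (i + m + 1) (i + m) A (fun _ => k) t)
          (A ⟨t, ht'⟩) k = some (s + i) := by
        rw [ihocc, hAj]; exact hbig
      have hnew : occUpTo (i + m + 1) (i + m) A (fun _ => k) (t + 1)
          = insert (s + i) (occUpTo (i + m + 1) (i + m) A (fun _ => k) t) :=
        occUpTo_succ_some ht' hbig'
      have hqlt : cnt Sᶜ t < m := by
        have := q.isLt; omega
      have hRnew : occUpTo (m + 1) m aR (fun _ => k) (cnt Sᶜ t + 1)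
          = insert s (occUpTo (m + 1) m aR (fun _ => k) (cnt Sᶜ t)) := by
        refine occUpTo_succ_some hqlt ?_
        have : (⟨cnt Sᶜ t, hqlt⟩ : Fin m) = q := Fin.ext (by simp [hqv])
        rw [this]
        exact hs
      constructor
      · rw [hnew, ihocc, cnt_succ_of_mem ht' hjSc,
          cnt_succ_of_not_mem ht' hjS, hRnew, Finset.image_insert,
          Finset.union_insert]
      · intro j hj
        rcases Nat.lt_or_ge (j : ℕ) t with h' | h'
        · exact ihsome j h'
        · have hjt : (j : ℕ) = t := by omega
          have : j = ⟨t, ht'⟩ := Fin.ext hjt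
          subst this
          unfold outcome
          rw [hbig']
          rfl

lemma merge_final (hS : S.card = i) (hSc : Sᶜ.card = m)
    (hLv : ∀ q, aL q ∈ Finset.Icc 1 i) (hRv : ∀ q, aR q ∈ Finset.Icc 2 (m + 1))
    (hL : AllPark i i aL (fun _ => k)) (hR : AllPark (m + 1) m aR (fun _ => k))
    (hR1 : (1 : ℕ) ∉ occUpTo (m + 1) m aR (fun _ => k) m) :
    occUpTo (i + m + 1) (i + m) (mergePref i m aL aR S hS hSc) (fun _ => k) (i + m)
      = Finset.Icc 1 (i + m + 1) \ {i + 1} := by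
  rw [(merge_invariant hS hSc hLv hRv hL hR hR1 (i + m) le_rfl).1, cnt_full, cnt_full, hS, hSc]
  have hLfull : occUpTo i i aL (fun _ => k) i = Finset.Icc 1 i := by
    apply Finset.eq_of_subset_of_card_le (occUpTo_subset_Icc _ hLv i)
    rw [card_occUpTo le_rfl (fun j _ => hL j), Nat.card_Icc]
    omega
  have hRfull : occUpTo (m + 1) m aR (fun _ => k) m = Finset.Icc 2 (m + 1) := by
    apply Finset.eq_of_subset_of_card_le (occR_subset hRv hR1 le_rfl)
    rw [card_occUpTo le_rfl (fun j _ => hR j), Nat.card_Icc]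
    omega
  rw [hLfull, hRfull, union_full]

end MergeDir

end PFaux
namespace PFaux

/-! ### The merged full sequence (with the last car) -/

def mergeAll (i m b : ℕ) (aL : Fin i → ℕ) (aR : Fin m → ℕ) (S : Finset (Fin (i + m)))
    (hS : S.card = i) (hSc : Sᶜ.card = m) : Fin (i + m + 1) → ℕ :=
  fun j => if hj : (j : ℕ) < i + m then mergePref i m aL aR S hS hSc ⟨j, hj⟩ else b

section MergeAll

variable {i m k b : ℕ} {aL : Fin i → ℕ} {aR : Fin m → ℕ} {S : Finset (Fin (i + m))}

lemma mergeAll_castSucc (hS : S.card = i) (hSc : Sᶜ.card = m) :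
    (fun j : Fin (i + m) => mergeAll i m b aL aR S hS hSc j.castSucc)
      = mergePref i m aL aR S hS hSc := by
  funext j
  unfold mergeAll
  rw [dif_pos (show ((j.castSucc : Fin (i + m + 1)) : ℕ) < i + m by simp)]
  congr 1

lemma mergeAll_occ (hS : S.card = i) (hSc : Sᶜ.card = m) {t : ℕ} (ht : t ≤ i + m) :
    occUpTo (i + m + 1) (i + m + 1) (mergeAll i m b aL aR S hS hSc) (fun _ => k) t
      = occUpTo (i + m + 1) (i + m) (mergePref i m aL aR S hS hSc) (fun _ => k) t := by
  rw [occUpTo_castSucc _ _ ht, mergeAll_castSucc hS hSc]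

variable (hS : S.card = i) (hSc : Sᶜ.card = m)
    (hLv : ∀ q, aL q ∈ Finset.Icc 1 i) (hRv : ∀ q, aR q ∈ Finset.Icc 2 (m + 1))
    (hL : AllPark i i aL (fun _ => k)) (hR : AllPark (m + 1) m aR (fun _ => k))
    (hR1 : (1 : ℕ) ∉ occUpTo (m + 1) m aR (fun _ => k) m)

include hS hSc hLv hRv hL hR hR1

lemma mergeAll_isPF (hb1 : 1 ≤ b) (hbk : b ≤ i + 1 + k) (hbN : b ≤ i + m + 1) :
    NaplesPF (i + m + 1) k (mergeAll i m b aL aR S hS hSc) := by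
  intro j
  rcases Nat.lt_or_ge (j : ℕ) (i + m) with hj | hj
  · unfold outcome
    rw [mergeAll_occ hS hSc (le_of_lt hj),
      show mergeAll i m b aL aR S hS hSc j = mergePref i m aL aR S hS hSc ⟨(j : ℕ), hj⟩ by
        unfold mergeAll; rw [dif_pos hj]]
    have := (merge_invariant hS hSc hLv hRv hL hR hR1 (i + m) le_rfl).2 ⟨(j : ℕ), hj⟩ hj
    unfold outcome at this
    exact this
  · have hj' : (j : ℕ) = i + m := by have := j.isLt; omega
    unfold outcome
    rw [hj', mergeAll_occ hS hSc le_rfl,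
      merge_final hS hSc hLv hRv hL hR hR1,
      show mergeAll i m b aL aR S hS hSc j = b by
        unfold mergeAll; rw [dif_neg (by omega)]]
    rw [show ((fun _ : Fin (i + m + 1) => k) j) = k from rfl,
      lastCar_some (by omega) (by omega) hb1 hbN (by omega)]
    rfl

lemma mergeAll_gapset (hb1 : 1 ≤ b) (hbk : b ≤ i + 1 + k) (hbN : b ≤ i + m + 1) :
    Finset.Icc 1 (i + m + 1) \
      occUpTo (i + m + 1) (i + m + 1) (mergeAll i m b aL aR S hS hSc) (fun _ => k) (i + m)
      = {i + 1} := by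
  rw [mergeAll_occ hS hSc le_rfl, merge_final hS hSc hLv hRv hL hR hR1,
    sdiff_sdiff_right_self, Finset.inf_eq_inter, Finset.inter_eq_right]
  intro x hx
  simp only [Finset.mem_singleton] at hx
  subst hx
  simp only [Finset.mem_Icc]
  omega

omit hS hSc hLv hRv hL hR hR1 in
lemma mergeAll_class (hS : S.card = i) (hSc : Sᶜ.card = m)
    (hLv : ∀ q, aL q ∈ Finset.Icc 1 i) (hRv : ∀ q, aR q ∈ Finset.Icc 2 (m + 1)) :
    Finset.univ.filter
      (fun j : Fin (i + m) => mergeAll i m b aL aR S hS hSc j.castSucc ≤ i) = S := by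
  ext j
  simp only [Finset.mem_filter, Finset.mem_univ, true_and]
  rw [show mergeAll i m b aL aR S hS hSc j.castSucc = mergePref i m aL aR S hS hSc j by
    rw [← mergeAll_castSucc hS hSc]]
  unfold mergePref
  by_cases hj : j ∈ S
  · rw [dif_pos hj]
    have := hLv ((S.orderIsoOfFin hS).symm ⟨j, hj⟩)
    simp only [Finset.mem_Icc] at this
    simp [hj, this.2]
  · rw [dif_neg hj]
    have := hRv ((Sᶜ.orderIsoOfFin hSc).symm ⟨j, Finset.mem_compl.mpr hj⟩)
    simp only [Finset.mem_Icc] at this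
    simp only [hj, iff_false]
    omega

omit hS hSc hLv hRv hL hR hR1 in
lemma mergeAll_val (hS : S.card = i) (hSc : Sᶜ.card = m)
    (hLv : ∀ q, aL q ∈ Finset.Icc 1 i) (hRv : ∀ q, aR q ∈ Finset.Icc 2 (m + 1))
    (hb1 : 1 ≤ b) (hbN : b ≤ i + m + 1) (j : Fin (i + m + 1)) :
    mergeAll i m b aL aR S hS hSc j ∈ Finset.Icc 1 (i + m + 1) := by
  unfold mergeAll
  split_ifs with hj
  · unfold mergePref
    split_ifs with hj2
    · have := hLv ((S.orderIsoOfFin hS).symm ⟨⟨(j : ℕ), hj⟩, hj2⟩)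
      simp only [Finset.mem_Icc] at *
      omega
    · have := hRv ((Sᶜ.orderIsoOfFin hSc).symm ⟨⟨(j : ℕ), hj⟩, Finset.mem_compl.mpr hj2⟩)
      simp only [Finset.mem_Icc] at *
      omega
  · simp only [Finset.mem_Icc]
    omega

end MergeAll

/-! ### Splitting: from a parking sequence with a gap to the two subsequences -/

def subSeq {n c : ℕ} (S : Finset (Fin n)) (hS : S.card = c) (a : Fin n → ℕ) :
    Fin c → ℕ := fun q => a (S.orderIsoOfFin hS q)

def subSeqR {n c : ℕ} (T : Finset (Fin n)) (hT : T.card = c) (a : Fin n → ℕ) (i : ℕ) :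
    Fin c → ℕ := fun q => a (T.orderIsoOfFin hT q) - i

section SplitDir

variable {i m k c cm : ℕ} {a' : Fin (i + m) → ℕ} {S : Finset (Fin (i + m))}

lemma split_invariant (hS : S.card = c) (hSc : Sᶜ.card = cm)
    (hv : ∀ j, a' j ∈ Finset.Icc 1 (i + m + 1))
    (hall : ∀ j : Fin (i + m), (outcome (i + m + 1) (i + m) a' (fun _ => k) j).isSome)
    (hgap : i + 1 ∉ occUpTo (i + m + 1) (i + m) a' (fun _ => k) (i + m))
    (hsplit : ∀ j, j ∈ S ↔ a' j ≤ i) :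
    ∀ t, t ≤ i + m →
      (occUpTo (i + m + 1) (i + m) a' (fun _ => k) t
        = occUpTo i c (subSeq S hS a') (fun _ => k) (cnt S t) ∪
          (occUpTo (m + 1) cm (subSeqR Sᶜ hSc a' i) (fun _ => k) (cnt Sᶜ t)).image
            (· + i)) ∧
      (∀ q : Fin c, (q : ℕ) < cnt S t →
        (outcome i c (subSeq S hS a') (fun _ => k) q).isSome) ∧
      (∀ q : Fin cm, (q : ℕ) < cnt Sᶜ t →
        (outcome (m + 1) cm (subSeqR Sᶜ hSc a' i) (fun _ => k) q).isSome) := by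
  have hvL : ∀ q, subSeq S hS a' q ∈ Finset.Icc 1 i := by
    intro q
    have h1 := (hsplit _).mp (S.orderIsoOfFin hS q).2
    have h2 := hv ((S.orderIsoOfFin hS q : Fin (i + m)))
    simp only [Finset.mem_Icc] at *
    exact ⟨h2.1, h1⟩
  have hvR : ∀ q, (subSeqR Sᶜ hSc a' i) q ∈ Finset.Icc 1 (m + 1) := by
    intro q
    have h1 : ¬ ((Sᶜ.orderIsoOfFin hSc q : Fin (i + m)) ∈ S) :=
      Finset.mem_compl.mp (Sᶜ.orderIsoOfFin hSc q).2
    rw [hsplit] at h1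
    have h2 := hv ((Sᶜ.orderIsoOfFin hSc q : Fin (i + m)))
    simp only [Finset.mem_Icc] at *
    unfold subSeqR
    omega
  intro t
  induction t with
  | zero =>
    intro _
    refine ⟨by simp [occUpTo, cnt_zero], ?_, ?_⟩ <;>
      (intro q hq; rw [cnt_zero] at hq; exact absurd hq (Nat.not_lt_zero _))
  | succ t ih =>
    intro ht1
    have ht' : t < i + m := ht1
    obtain ⟨ihocc, ihsomeL, ihsomeR⟩ := ih (by omega)
    have hsubL : occUpTo i c (subSeq S hS a') (fun _ => k) (cnt S t) ⊆ Finset.Icc 1 i :=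
      occUpTo_subset_Icc _ hvL _
    have hR1t : (1 : ℕ) ∉ occUpTo (m + 1) cm (subSeqR Sᶜ hSc a' i)
        (fun _ => k) (cnt Sᶜ t) := by
      intro h1
      apply hgap
      apply occUpTo_mono _ _ (show t ≤ i + m by omega)
      rw [ihocc]
      apply Finset.mem_union_right
      rw [mem_image_add]
      exact ⟨by omega, by simpa using h1⟩
    have hsubR : occUpTo (m + 1) cm (subSeqR Sᶜ hSc a' i) (fun _ => k)
        (cnt Sᶜ t) ⊆ Finset.Icc 2 (m + 1) := by
      intro x hx
      have h1 := occUpTo_subset_Icc _ hvR _ hx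
      have h2 : x ≠ 1 := by rintro rfl; exact hR1t hx
      simp only [Finset.mem_Icc] at *
      omega
    have hnotgap : i + 1 ∉ occUpTo (i + m + 1) (i + m) a' (fun _ => k) t := by
      rw [ihocc]; exact gap_not_mem_union hsubL hsubR
    have hgap1 : ∀ s, parkSpot (i + m + 1) (occUpTo (i + m + 1) (i + m) a' (fun _ => k) t)
        (a' ⟨t, ht'⟩) k = some s → s ≠ i + 1 := by
      intro s hps hse
      subst hse
      have heq : occUpTo (i + m + 1) (i + m) a' (fun _ => k) (t + 1)
          = insert (i + 1) (occUpTo (i + m + 1) (i + m) a' (fun _ => k) t) :=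
        occUpTo_succ_some ht' hps
      have hmem : i + 1 ∈ occUpTo (i + m + 1) (i + m) a' (fun _ => k) (t + 1) := by
        rw [heq]
        exact Finset.mem_insert_self _ _
      exact hgap (occUpTo_mono _ _ (show t + 1 ≤ i + m by omega) hmem)
    by_cases hjS : (⟨t, ht'⟩ : Fin (i + m)) ∈ S
    · -- left car
      have hp := (hsplit _).mp hjS
      have hp1 := hv ⟨t, ht'⟩
      simp only [Finset.mem_Icc] at hp1
      set q := (S.orderIsoOfFin hS).symm ⟨⟨t, ht'⟩, hjS⟩ with hqdef
      have hqv : (q : ℕ) = cnt S t := by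
        rw [hqdef, orderIsoOfFin_symm_rank S hS hjS]
      have haq : subSeq S hS a' q = a' ⟨t, ht'⟩ := by
        unfold subSeq
        rw [hqdef, OrderIso.apply_symm_apply]
      have hqlt : cnt S t < c := by
        have := cnt_lt_card_of_mem ht' hjS; omega
      cases hres : parkSpot i (occUpTo i c (subSeq S hS a') (fun _ => k) (cnt S t))
          (a' ⟨t, ht'⟩) k with
      | none =>
        exfalso
        have hbig := stepL_none (occL := occUpTo i c (subSeq S hS a') (fun _ => k) (cnt S t))
          hsubL hsubR hp1.1 hp hres
        rw [← ihocc] at hbig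
        exact hgap1 _ hbig rfl
      | some s =>
        have hbig := stepL_some (occL := occUpTo i c (subSeq S hS a') (fun _ => k) (cnt S t))
          hsubL hsubR hp1.1 hp hres
        rw [← ihocc] at hbig
        have hnew := occUpTo_succ_some ht' hbig
        have hLnew : occUpTo i c (subSeq S hS a') (fun _ => k) (cnt S t + 1)
            = insert s (occUpTo i c (subSeq S hS a') (fun _ => k) (cnt S t)) := by
          refine occUpTo_succ_some hqlt ?_
          rw [show (⟨cnt S t, hqlt⟩ : Fin c) = q from Fin.ext (by simp [hqv]), haq]
          exact hres
        refine ⟨?_, ?_, ?_⟩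
        · rw [hnew, ihocc, cnt_succ_of_mem ht' hjS,
            cnt_succ_of_not_mem ht' (by simp [hjS]), hLnew, Finset.insert_union]
        · intro q' hq'
          rw [cnt_succ_of_mem ht' hjS] at hq'
          rcases Nat.lt_or_ge (q' : ℕ) (cnt S t) with h' | h'
          · exact ihsomeL q' h'
          · have : q' = q := Fin.ext (by omega)
            subst this
            unfold outcome
            rw [hqv, haq, hres]
            rfl
        · intro q' hq'
          rw [cnt_succ_of_not_mem ht' (by simp [hjS])] at hq'
          exact ihsomeR q' hq'
    · -- right car
      have hjSc : (⟨t, ht'⟩ : Fin (i + m)) ∈ Sᶜ := Finset.mem_compl.mpr hjS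
      have hpgt : ¬ (a' ⟨t, ht'⟩ ≤ i) := fun h => hjS ((hsplit _).mpr h)
      have hp1 := hv ⟨t, ht'⟩
      simp only [Finset.mem_Icc] at hp1
      have hpne : a' ⟨t, ht'⟩ ≠ i + 1 := by
        intro hpe
        apply hgap1 (i + 1) _ rfl
        rw [← hpe] at hnotgap ⊢
        exact parkSpot_of_not_mem hnotgap
      have hpge : i + 2 ≤ a' ⟨t, ht'⟩ := by omega
      set q := (Sᶜ.orderIsoOfFin hSc).symm ⟨⟨t, ht'⟩, hjSc⟩ with hqdef
      have hqv : (q : ℕ) = cnt Sᶜ t := by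
        rw [hqdef, orderIsoOfFin_symm_rank Sᶜ hSc hjSc]
      have haq : subSeqR Sᶜ hSc a' i q = a' ⟨t, ht'⟩ - i := by
        unfold subSeqR
        rw [hqdef, OrderIso.apply_symm_apply]
      have hqlt : cnt Sᶜ t < cm := by
        have := cnt_lt_card_of_mem ht' hjSc; omega
      have hbigr := stepR (k := k) (occR := occUpTo (m + 1) cm (subSeqR Sᶜ hSc a' i)
          (fun _ => k) (cnt Sᶜ t)) (p := a' ⟨t, ht'⟩ - i)
        hsubL hsubR (by omega) (by omega)
      rw [show a' ⟨t, ht'⟩ - i + i = a' ⟨t, ht'⟩ by omega, ← ihocc] at hbigr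
      have hallt := hall ⟨t, ht'⟩
      unfold outcome at hallt
      rw [hbigr] at hallt
      cases hres : parkSpot (m + 1)
          (occUpTo (m + 1) cm (subSeqR Sᶜ hSc a' i) (fun _ => k) (cnt Sᶜ t))
          (a' ⟨t, ht'⟩ - i) k with
      | none => rw [hres] at hallt; simp at hallt
      | some s =>
        rw [hres] at hbigr
        have hbig : parkSpot (i + m + 1) (occUpTo (i + m + 1) (i + m) a' (fun _ => k) t)
            (a' ⟨t, ht'⟩) k = some (s + i) := hbigr
        have hs1 : s ≠ 1 := by
          intro hs1
          apply hgap1 _ hbig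
          omega
        have hnew := occUpTo_succ_some ht' hbig
        have hRnew : occUpTo (m + 1) cm (subSeqR Sᶜ hSc a' i) (fun _ => k)
            (cnt Sᶜ t + 1)
            = insert s (occUpTo (m + 1) cm (subSeqR Sᶜ hSc a' i) (fun _ => k)
                (cnt Sᶜ t)) := by
          refine occUpTo_succ_some hqlt ?_
          rw [show (⟨cnt Sᶜ t, hqlt⟩ : Fin cm) = q from Fin.ext (by simp [hqv]), haq]
          exact hres
        refine ⟨?_, ?_, ?_⟩
        · rw [hnew, ihocc, cnt_succ_of_mem ht' hjSc, cnt_succ_of_not_mem ht' hjS,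
            hRnew, Finset.image_insert, Finset.union_insert]
        · intro q' hq'
          rw [cnt_succ_of_not_mem ht' hjS] at hq'
          exact ihsomeL q' hq'
        · intro q' hq'
          rw [cnt_succ_of_mem ht' hjSc] at hq'
          rcases Nat.lt_or_ge (q' : ℕ) (cnt Sᶜ t) with h' | h'
          · exact ihsomeR q' h'
          · have : q' = q := Fin.ext (by omega)
            subst this
            unfold outcome
            rw [hqv, haq, hres]
            rfl

end SplitDir

end PFaux
namespace PFaux

section SplitCor

variable {i m k : ℕ} {a' : Fin (i + m) → ℕ}

lemma pref_ne_gap (hall : ∀ j : Fin (i + m), (outcome (i + m + 1) (i + m) a' (fun _ => k) j).isSome)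
    (hgap : i + 1 ∉ occUpTo (i + m + 1) (i + m) a' (fun _ => k) (i + m))
    (j : Fin (i + m)) : a' j ≠ i + 1 := by
  intro hpe
  have hnot : i + 1 ∉ occUpTo (i + m + 1) (i + m) a' (fun _ => k) (j : ℕ) :=
    fun h => hgap (occUpTo_mono _ _ (by omega) h)
  have hps : parkSpot (i + m + 1) (occUpTo (i + m + 1) (i + m) a' (fun _ => k) (j : ℕ))
      (a' ⟨(j : ℕ), j.isLt⟩) k = some (i + 1) := by
    rw [show (⟨(j : ℕ), j.isLt⟩ : Fin (i + m)) = j from Fin.ext rfl, hpe]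
    exact parkSpot_of_not_mem hnot
  have heq : occUpTo (i + m + 1) (i + m) a' (fun _ => k) ((j : ℕ) + 1)
      = insert (i + 1) (occUpTo (i + m + 1) (i + m) a' (fun _ => k) (j : ℕ)) :=
    occUpTo_succ_some j.isLt hps
  apply hgap
  apply occUpTo_mono _ _ (show (j : ℕ) + 1 ≤ i + m by omega)
  rw [heq]
  exact Finset.mem_insert_self _ _

lemma split_card (hv : ∀ j, a' j ∈ Finset.Icc 1 (i + m + 1))
    (hall : ∀ j : Fin (i + m), (outcome (i + m + 1) (i + m) a' (fun _ => k) j).isSome)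
    (hgap : i + 1 ∉ occUpTo (i + m + 1) (i + m) a' (fun _ => k) (i + m)) :
    (Finset.univ.filter (fun j : Fin (i + m) => a' j ≤ i)).card = i := by
  set S := Finset.univ.filter (fun j : Fin (i + m) => a' j ≤ i) with hSdef
  have hsplit : ∀ j, j ∈ S ↔ a' j ≤ i := by
    intro j; rw [hSdef]; simp
  have inv := split_invariant (hS := rfl) (hSc := rfl) hv hall hgap hsplit (i + m) le_rfl
  rw [cnt_full, cnt_full] at inv
  have hvL : ∀ q, subSeq S rfl a' q ∈ Finset.Icc 1 i := by
    intro q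
    have h1 := (hsplit _).mp (S.orderIsoOfFin rfl q).2
    have h2 := hv ((S.orderIsoOfFin rfl q : Fin (i + m)))
    simp only [Finset.mem_Icc] at *
    exact ⟨h2.1, h1⟩
  have hvR : ∀ q, subSeqR Sᶜ rfl a' i q ∈ Finset.Icc 1 (m + 1) := by
    intro q
    have h1 : ¬ ((Sᶜ.orderIsoOfFin rfl q : Fin (i + m)) ∈ S) :=
      Finset.mem_compl.mp (Sᶜ.orderIsoOfFin rfl q).2
    rw [hsplit] at h1
    have h2 := hv ((Sᶜ.orderIsoOfFin rfl q : Fin (i + m)))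
    simp only [Finset.mem_Icc] at *
    unfold subSeqR
    omega
  have hcardL : (occUpTo i S.card (subSeq S rfl a') (fun _ => k) S.card).card = S.card :=
    card_occUpTo le_rfl (fun q hq => inv.2.1 q (by omega))
  have hcardR : (occUpTo (m + 1) Sᶜ.card (subSeqR Sᶜ rfl a' i) (fun _ => k) Sᶜ.card).card
      = Sᶜ.card :=
    card_occUpTo le_rfl (fun q hq => inv.2.2 q (by omega))
  have hR1 : (1 : ℕ) ∉ occUpTo (m + 1) Sᶜ.card (subSeqR Sᶜ rfl a' i) (fun _ => k) Sᶜ.card := by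
    intro h1
    apply hgap
    rw [inv.1]
    apply Finset.mem_union_right
    rw [mem_image_add]
    exact ⟨by omega, by simpa using h1⟩
  have hbL : S.card ≤ i := by
    have := Finset.card_le_card
      ((occUpTo_subset_Icc (fun _ => k) hvL S.card) :
        occUpTo i S.card (subSeq S rfl a') (fun _ => k) S.card ⊆ Finset.Icc 1 i)
    rw [hcardL, Nat.card_Icc] at this
    omega
  have hbR : Sᶜ.card ≤ m := by
    have hsub : occUpTo (m + 1) Sᶜ.card (subSeqR Sᶜ rfl a' i) (fun _ => k) Sᶜ.card
        ⊆ Finset.Icc 2 (m + 1) := by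
      intro x hx
      have h1 := occUpTo_subset_Icc _ hvR _ hx
      have h2 : x ≠ 1 := by rintro rfl; exact hR1 hx
      simp only [Finset.mem_Icc] at *
      omega
    have := Finset.card_le_card hsub
    rw [hcardR, Nat.card_Icc] at this
    omega
  have hsum : S.card + Sᶜ.card = i + m := by
    rw [Finset.card_add_card_compl, Fintype.card_fin]
  omega

lemma split_main {S : Finset (Fin (i + m))} (hS : S.card = i) (hSc : Sᶜ.card = m)
    (hv : ∀ j, a' j ∈ Finset.Icc 1 (i + m + 1))
    (hall : ∀ j : Fin (i + m), (outcome (i + m + 1) (i + m) a' (fun _ => k) j).isSome)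
    (hgap : i + 1 ∉ occUpTo (i + m + 1) (i + m) a' (fun _ => k) (i + m))
    (hsplit : ∀ j, j ∈ S ↔ a' j ≤ i) :
    AllPark i i (subSeq S hS a') (fun _ => k) ∧
    (∀ q, subSeq S hS a' q ∈ Finset.Icc 1 i) ∧
    AllPark (m + 1) m (subSeqR Sᶜ hSc a' i) (fun _ => k) ∧
    (1 : ℕ) ∉ occUpTo (m + 1) m (subSeqR Sᶜ hSc a' i) (fun _ => k) m ∧
    (∀ q, subSeqR Sᶜ hSc a' i q ∈ Finset.Icc 2 (m + 1)) ∧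
    occUpTo (i + m + 1) (i + m) a' (fun _ => k) (i + m)
      = Finset.Icc 1 (i + m + 1) \ {i + 1} := by
  have inv := split_invariant (hS := hS) (hSc := hSc) hv hall hgap hsplit (i + m) le_rfl
  rw [cnt_full, cnt_full, hS, hSc] at inv
  have hvL : ∀ q, subSeq S hS a' q ∈ Finset.Icc 1 i := by
    intro q
    have h1 := (hsplit _).mp (S.orderIsoOfFin hS q).2
    have h2 := hv ((S.orderIsoOfFin hS q : Fin (i + m)))
    simp only [Finset.mem_Icc] at *
    exact ⟨h2.1, h1⟩
  have hAL : AllPark i i (subSeq S hS a') (fun _ => k) := fun q => inv.2.1 q q.isLt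
  have hAR : AllPark (m + 1) m (subSeqR Sᶜ hSc a' i) (fun _ => k) := fun q => inv.2.2 q q.isLt
  have hR1 : (1 : ℕ) ∉ occUpTo (m + 1) m (subSeqR Sᶜ hSc a' i) (fun _ => k) m := by
    intro h1
    apply hgap
    rw [inv.1]
    apply Finset.mem_union_right
    rw [mem_image_add]
    exact ⟨by omega, by simpa using h1⟩
  have hvR : ∀ q, subSeqR Sᶜ hSc a' i q ∈ Finset.Icc 2 (m + 1) := by
    intro q
    have h1 : ¬ ((Sᶜ.orderIsoOfFin hSc q : Fin (i + m)) ∈ S) :=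
      Finset.mem_compl.mp (Sᶜ.orderIsoOfFin hSc q).2
    rw [hsplit] at h1
    have h2 := hv ((Sᶜ.orderIsoOfFin hSc q : Fin (i + m)))
    have h3 := pref_ne_gap hall hgap ((Sᶜ.orderIsoOfFin hSc q : Fin (i + m)))
    simp only [Finset.mem_Icc] at *
    unfold subSeqR
    omega
  refine ⟨hAL, hvL, hAR, hR1, hvR, ?_⟩
  rw [inv.1]
  have hLfull : occUpTo i i (subSeq S hS a') (fun _ => k) i = Finset.Icc 1 i := by
    apply Finset.eq_of_subset_of_card_le (occUpTo_subset_Icc _ hvL i)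
    rw [card_occUpTo le_rfl (fun j _ => hAL j), Nat.card_Icc]
    omega
  have hRfull : occUpTo (m + 1) m (subSeqR Sᶜ hSc a' i) (fun _ => k) m
      = Finset.Icc 2 (m + 1) := by
    apply Finset.eq_of_subset_of_card_le (occR_subset hvR hR1 le_rfl)
    rw [card_occUpTo le_rfl (fun j _ => hAR j), Nat.card_Icc]
    omega
  rw [hLfull, hRfull, union_full]

end SplitCor

end PFaux
namespace PFaux

/-! ### The circular simulation and Pollak's rotation argument -/

section Circular

variable {m k : ℕ}

/-- circular parking: check `p`, then `p-1, …, p-k`, then `p+1, p+2, …` (mod `m+1`). -/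
def cNext (m k : ℕ) (occ : Finset (ZMod (m + 1))) (p : ZMod (m + 1)) : ZMod (m + 1) :=
  if p ∉ occ then p
  else if hb : ((Finset.Icc 1 k).filter
      (fun j : ℕ => p - (j : ZMod (m + 1)) ∉ occ)).Nonempty then
    p - (((Finset.Icc 1 k).filter (fun j : ℕ => p - (j : ZMod (m + 1)) ∉ occ)).min' hb : ℕ)
  else if hf : ((Finset.Icc 1 m).filter
      (fun j : ℕ => p + (j : ZMod (m + 1)) ∉ occ)).Nonempty then
    p + (((Finset.Icc 1 m).filter (fun j : ℕ => p + (j : ZMod (m + 1)) ∉ occ)).min' hf : ℕ)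
  else p

lemma cNext_not_mem {occ : Finset (ZMod (m + 1))} {p : ZMod (m + 1)}
    (hcard : occ.card ≤ m) : cNext m k occ p ∉ occ := by
  by_cases h1 : p ∉ occ
  · rw [cNext, if_pos h1]; exact h1
  rw [cNext, if_neg h1]
  rw [not_not] at h1
  by_cases hb : ((Finset.Icc 1 k).filter
      (fun j : ℕ => p - (j : ZMod (m + 1)) ∉ occ)).Nonempty
  · rw [dif_pos hb]
    have := Finset.min'_mem _ hb
    simp only [Finset.mem_filter] at this
    exact this.2
  rw [dif_neg hb]
  by_cases hf : ((Finset.Icc 1 m).filter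
      (fun j : ℕ => p + (j : ZMod (m + 1)) ∉ occ)).Nonempty
  · rw [dif_pos hf]
    have := Finset.min'_mem _ hf
    simp only [Finset.mem_filter] at this
    exact this.2
  · exfalso
    have hne : ∃ s, s ∉ occ := by
      by_contra hc
      push_neg at hc
      have : (Finset.univ : Finset (ZMod (m + 1))) ⊆ occ := fun x _ => hc x
      have hcard2 := Finset.card_le_card this
      rw [Finset.card_univ, ZMod.card] at hcard2
      omega
    obtain ⟨s, hs⟩ := hne
    have hsp : s ≠ p := fun h => hs (h ▸ h1)
    apply hf
    refine ⟨(s - p).val, ?_⟩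
    simp only [Finset.mem_filter, Finset.mem_Icc]
    have hv0 : (s - p).val ≠ 0 := (ZMod.val_ne_zero _).mpr (sub_ne_zero.mpr hsp)
    have hvlt : (s - p).val < m + 1 := ZMod.val_lt _
    refine ⟨⟨by omega, by omega⟩, ?_⟩
    rw [ZMod.natCast_val, ZMod.cast_id]
    rw [show p + (s - p) = s by ring]
    exact hs

def cOcc (m k : ℕ) (β : Fin m → ZMod (m + 1)) : ℕ → Finset (ZMod (m + 1))
  | 0 => ∅
  | t + 1 =>
    if h : t < m then insert (cNext m k (cOcc m k β t) (β ⟨t, h⟩)) (cOcc m k β t)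
    else cOcc m k β t

lemma cOcc_zero (β : Fin m → ZMod (m + 1)) : cOcc m k β 0 = ∅ := rfl

lemma cOcc_succ (β : Fin m → ZMod (m + 1)) {t : ℕ} (h : t < m) :
    cOcc m k β (t + 1) = insert (cNext m k (cOcc m k β t) (β ⟨t, h⟩)) (cOcc m k β t) := by
  rw [cOcc, dif_pos h]

lemma cOcc_mono (β : Fin m → ZMod (m + 1)) {t t' : ℕ} (h : t ≤ t') :
    cOcc m k β t ⊆ cOcc m k β t' := by
  induction t' with
  | zero => simp_all
  | succ u ih =>
    rcases Nat.lt_or_ge t (u + 1) with h' | h'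
    · refine (ih (by omega)).trans ?_
      by_cases hu : u < m
      · rw [cOcc_succ β hu]; exact Finset.subset_insert _ _
      · rw [cOcc, dif_neg hu]
    · have : t = u + 1 := by omega
      subst this; exact subset_rfl

lemma card_cOcc (β : Fin m → ZMod (m + 1)) {t : ℕ} (ht : t ≤ m) :
    (cOcc m k β t).card = t := by
  induction t with
  | zero => simp [cOcc_zero]
  | succ u ih =>
    have hu : u < m := ht
    have hcard : (cOcc m k β u).card = u := ih (by omega)
    rw [cOcc_succ β hu, Finset.card_insert_of_notMem (cNext_not_mem (by omega)), hcard]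

lemma mem_image_addZ {S : Finset (ZMod (m + 1))} {y d : ZMod (m + 1)} :
    y ∈ S.image (· + d) ↔ y - d ∈ S := by
  simp only [Finset.mem_image]
  constructor
  · rintro ⟨x, hx, rfl⟩
    rwa [show x + d - d = x by ring]
  · intro h
    exact ⟨y - d, h, by ring⟩

lemma cNext_shift {occ : Finset (ZMod (m + 1))} (hcard : occ.card ≤ m)
    (p d : ZMod (m + 1)) :
    cNext m k (occ.image (· + d)) (p + d) = cNext m k occ p + d := by
  have hmem : ((p + d) ∈ occ.image (· + d)) = (p ∈ occ) := by
    rw [mem_image_addZ, show p + d - d = p by ring]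
  have hWeq : (Finset.Icc 1 k).filter
        (fun j : ℕ => p + d - (j : ZMod (m + 1)) ∉ occ.image (· + d))
      = (Finset.Icc 1 k).filter (fun j : ℕ => p - (j : ZMod (m + 1)) ∉ occ) := by
    apply Finset.filter_congr
    intro j _
    rw [mem_image_addZ, show p + d - (j : ZMod (m + 1)) - d = p - j by ring]
  have hFeq : (Finset.Icc 1 m).filter
        (fun j : ℕ => p + d + (j : ZMod (m + 1)) ∉ occ.image (· + d))
      = (Finset.Icc 1 m).filter (fun j : ℕ => p + (j : ZMod (m + 1)) ∉ occ) := by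
    apply Finset.filter_congr
    intro j _
    rw [mem_image_addZ, show p + d + (j : ZMod (m + 1)) - d = p + j by ring]
  unfold cNext
  simp only [hmem, hWeq, hFeq]
  split_ifs with h1 hb hf <;> ring

lemma cOcc_shift (β : Fin m → ZMod (m + 1)) (d : ZMod (m + 1)) {t : ℕ} (ht : t ≤ m) :
    cOcc m k (fun q => β q + d) t = (cOcc m k β t).image (· + d) := by
  induction t with
  | zero => simp [cOcc_zero]
  | succ u ih =>
    have hu : u < m := ht
    rw [cOcc_succ _ hu, cOcc_succ β hu, ih (by omega),
      cNext_shift (by rw [card_cOcc β (by omega)]; omega), Finset.image_insert]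

def cGap (m k : ℕ) (β : Fin m → ZMod (m + 1)) : ZMod (m + 1) :=
  ∑ x ∈ Finset.univ \ cOcc m k β m, x

lemma cGap_spec (β : Fin m → ZMod (m + 1)) :
    Finset.univ \ cOcc m k β m = {cGap m k β} := by
  have hcard : (Finset.univ \ cOcc m k β m).card = 1 := by
    rw [Finset.card_sdiff_of_subset (Finset.subset_univ _), Finset.card_univ, ZMod.card,
      card_cOcc β le_rfl]
    omega
  obtain ⟨g, hg⟩ := Finset.card_eq_one.mp hcard
  rw [hg]
  unfold cGap
  rw [hg, Finset.sum_singleton]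

lemma cGap_shift (β : Fin m → ZMod (m + 1)) (d : ZMod (m + 1)) :
    cGap m k (fun q => β q + d) = cGap m k β + d := by
  have h1 : Finset.univ \ cOcc m k (fun q => β q + d) m
      = (Finset.univ \ cOcc m k β m).image (· + d) := by
    rw [cOcc_shift β d le_rfl]
    ext x
    simp only [Finset.mem_sdiff, Finset.mem_univ, true_and, mem_image_addZ]
  have h2 := cGap_spec (m := m) (k := k) (fun q => β q + d)
  rw [h1, cGap_spec β, Finset.image_singleton] at h2
  exact (Finset.singleton_injective h2).symm

lemma card_cGap_zero_mul :
    ((Finset.univ : Finset (Fin m → ZMod (m + 1))).filter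
      (fun β => cGap m k β = 0)).card * (m + 1) = (m + 1) ^ m := by
  have htot : ((Finset.univ : Finset (Fin m → ZMod (m + 1)))).card = (m + 1) ^ m := by
    rw [Finset.card_univ, Fintype.card_fun, ZMod.card, Fintype.card_fin]
  have hfib : ∀ g : ZMod (m + 1),
      ((Finset.univ : Finset (Fin m → ZMod (m + 1))).filter
        (fun β => cGap m k β = g)).card
      = ((Finset.univ : Finset (Fin m → ZMod (m + 1))).filter
        (fun β => cGap m k β = 0)).card := by
    intro g
    apply Finset.card_bij' (fun β _ => fun q => β q - g) (fun β _ => fun q => β q + g)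
    · intro β hβ
      simp only [Finset.mem_filter, Finset.mem_univ, true_and] at *
      have : cGap m k (fun q => (fun q => β q - g) q + g) = cGap m k (fun q => β q - g) + g :=
        cGap_shift _ g
      simp only [sub_add_cancel] at this
      rw [hβ] at this
      have h0 : cGap m k (fun q => β q - g) + g = 0 + g := by rw [zero_add, ← this]
      exact add_right_cancel h0
    · intro β hβ
      simp only [Finset.mem_filter, Finset.mem_univ, true_and] at *
      rw [cGap_shift _ g, hβ, zero_add]
    · intro β _; funext q; simp
    · intro β _; funext q; simp
  have hsum : (Finset.univ : Finset (Fin m → ZMod (m + 1))).card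
      = ∑ g ∈ (Finset.univ : Finset (ZMod (m + 1))),
          ((Finset.univ : Finset (Fin m → ZMod (m + 1))).filter
            (fun β => cGap m k β = g)).card :=
    Finset.card_eq_sum_card_fiberwise (fun x _ => Finset.mem_univ _)
  have hz : (Finset.univ : Finset (ZMod (m + 1))).card = m + 1 := by
    rw [Finset.card_univ, ZMod.card]
  rw [Finset.sum_congr rfl (fun g _ => hfib g), Finset.sum_const, hz, smul_eq_mul] at hsum
  rw [← htot, hsum, mul_comm]

lemma card_cGap_zero :
    ((Finset.univ : Finset (Fin m → ZMod (m + 1))).filter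
      (fun β => cGap m k β = 0)).card = (m + 1) ^ (m - 1) := by
  have h := card_cGap_zero_mul (m := m) (k := k)
  cases m with
  | zero => simpa using h
  | succ m' =>
    have hexp : (m' + 1 + 1) ^ (m' + 1) = (m' + 1 + 1) ^ (m' + 1 - 1) * (m' + 1 + 1) := by
      rw [show m' + 1 - 1 = m' from rfl, pow_succ]
    rw [hexp] at h
    exact Nat.eq_of_mul_eq_mul_right (by omega) h

lemma cGap_eq_zero_iff (β : Fin m → ZMod (m + 1)) :
    cGap m k β = 0 ↔ (0 : ZMod (m + 1)) ∉ cOcc m k β m := by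
  constructor
  · intro h h0
    have := cGap_spec (k := k) β
    rw [h] at this
    have : (0 : ZMod (m + 1)) ∈ Finset.univ \ cOcc m k β m := by
      rw [this]; exact Finset.mem_singleton_self _
    simp only [Finset.mem_sdiff] at this
    exact this.2 h0
  · intro h0
    have h1 : (0 : ZMod (m + 1)) ∈ Finset.univ \ cOcc m k β m := by
      simp only [Finset.mem_sdiff, Finset.mem_univ, true_and]
      exact h0
    rw [cGap_spec β, Finset.mem_singleton] at h1
    exact h1.symm

end Circular

end PFaux
namespace PFaux

section Corr

variable {m k : ℕ}

def toZ (m : ℕ) (s : ℕ) : ZMod (m + 1) := ((s - 1 : ℕ) : ZMod (m + 1))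

lemma toZ_inj {s s' : ℕ} (hs : s ∈ Finset.Icc 1 (m + 1)) (hs' : s' ∈ Finset.Icc 1 (m + 1))
    (h : toZ m s = toZ m s') : s = s' := by
  simp only [Finset.mem_Icc] at hs hs'
  unfold toZ at h
  have := congrArg ZMod.val h
  rw [ZMod.val_cast_of_lt (by omega), ZMod.val_cast_of_lt (by omega)] at this
  omega

lemma toZ_mem_image {occ : Finset ℕ} (hocc : occ ⊆ Finset.Icc 2 (m + 1)) {s : ℕ}
    (hs : s ∈ Finset.Icc 1 (m + 1)) :
    toZ m s ∈ occ.image (toZ m) ↔ s ∈ occ := by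
  constructor
  · intro h
    rw [Finset.mem_image] at h
    obtain ⟨y, hy, he⟩ := h
    have hy2 := hocc hy
    have : y = s := toZ_inj (by simp only [Finset.mem_Icc] at hy2 ⊢; omega) hs he
    rwa [← this]
  · exact fun h => Finset.mem_image_of_mem _ h

lemma zero_not_mem_image {occ : Finset ℕ} (hocc : occ ⊆ Finset.Icc 2 (m + 1)) :
    (0 : ZMod (m + 1)) ∉ occ.image (toZ m) := by
  rw [Finset.mem_image]
  rintro ⟨y, hy, he⟩
  have hy2 := hocc hy
  simp only [Finset.mem_Icc] at hy2
  unfold toZ at he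
  have := congrArg ZMod.val he
  rw [ZMod.val_cast_of_lt (by omega), ZMod.val_zero] at this
  omega

lemma toZ_sub {p j : ℕ} (h1 : 1 ≤ j) (h2 : j ≤ p - 1) :
    toZ m p - (j : ZMod (m + 1)) = toZ m (p - j) := by
  unfold toZ
  rw [← Nat.cast_sub (by omega : j ≤ p - 1)]
  congr 1
  omega

lemma toZ_add {p : ℕ} (j : ℕ) (hp : 1 ≤ p) :
    toZ m p + (j : ZMod (m + 1)) = toZ m (p + j) := by
  unfold toZ
  rw [← Nat.cast_add]
  congr 1
  omega

lemma toZ_wrapf {p : ℕ} (h2 : 2 ≤ p) (hpm : p ≤ m + 1) :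
    toZ m p + ((m + 2 - p : ℕ) : ZMod (m + 1)) = 0 := by
  unfold toZ
  rw [← Nat.cast_add, show p - 1 + (m + 2 - p) = m + 1 by omega, ZMod.natCast_self]

lemma no_dip {occ : Finset ℕ} (hocc : occ ⊆ Finset.Icc 2 (m + 1)) {p : ℕ} (hp2 : 2 ≤ p)
    (hW : ¬ ((Finset.Ico (max 1 (p - k)) p).filter (fun j => j ∉ occ)).Nonempty) :
    k + 2 ≤ p := by
  by_contra hkp
  apply hW
  refine ⟨1, ?_⟩
  simp only [Finset.mem_filter, Finset.mem_Ico]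
  refine ⟨⟨?_, by omega⟩, fun h => ?_⟩
  · exact max_le le_rfl (by omega)
  · have := hocc h; simp only [Finset.mem_Icc] at this; omega

lemma backup_empty_toZ {occ : Finset ℕ} (hocc : occ ⊆ Finset.Icc 2 (m + 1)) {p : ℕ}
    (hp2 : 2 ≤ p) (hpm : p ≤ m + 1)
    (hW : ¬ ((Finset.Ico (max 1 (p - k)) p).filter (fun j => j ∉ occ)).Nonempty) :
    ¬ ((Finset.Icc 1 k).filter
        (fun j : ℕ => toZ m p - (j : ZMod (m + 1)) ∉ occ.image (toZ m))).Nonempty := by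
  have hk2 : k + 2 ≤ p := no_dip hocc hp2 hW
  rintro ⟨j, hj⟩
  simp only [Finset.mem_filter, Finset.mem_Icc] at hj
  obtain ⟨⟨hj1, hj2⟩, hj3⟩ := hj
  have hmemocc : p - j ∈ occ := by
    by_contra hno
    apply hW
    refine ⟨p - j, ?_⟩
    simp only [Finset.mem_filter, Finset.mem_Ico]
    exact ⟨⟨max_le (by omega) (by omega), by omega⟩, hno⟩
  apply hj3
  rw [toZ_sub hj1 (by omega), toZ_mem_image hocc (by simp only [Finset.mem_Icc]; omega)]
  exact hmemocc

lemma cstep_some {occ : Finset ℕ} (hocc : occ ⊆ Finset.Icc 2 (m + 1)) {p s : ℕ}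
    (hp2 : 2 ≤ p) (hpm : p ≤ m + 1) (hs : parkSpot (m + 1) occ p k = some s) :
    cNext m k (occ.image (toZ m)) (toZ m p) = toZ m s := by
  by_cases hpo : p ∈ occ
  · have hcond : ¬ (toZ m p ∉ occ.image (toZ m)) :=
      not_not_intro ((toZ_mem_image hocc (by simp only [Finset.mem_Icc]; omega)).mpr hpo)
    by_cases hW : ((Finset.Ico (max 1 (p - k)) p).filter (fun j => j ∉ occ)).Nonempty
    · -- backup case
      rw [parkSpot_of_backup hpo hW, Option.some_inj] at hs
      set sb := ((Finset.Ico (max 1 (p - k)) p).filter (fun j => j ∉ occ)).max' hW with hsb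
      have hsbm := Finset.max'_mem _ hW
      rw [← hsb] at hsbm
      simp only [Finset.mem_filter, Finset.mem_Ico] at hsbm
      have hsb1 : 1 ≤ sb := le_trans (le_max_left 1 (p - k)) hsbm.1.1
      have hsbk : p - k ≤ sb := le_trans (le_max_right 1 (p - k)) hsbm.1.1
      have hsbp : sb < p := hsbm.1.2
      have hjs1 : 1 ≤ p - sb := by omega
      have hjsk : p - sb ≤ k := by omega
      have htr : ∀ j, 1 ≤ j → j ≤ p - 1 →
          ((toZ m p - (j : ZMod (m + 1)) ∉ occ.image (toZ m)) ↔ p - j ∉ occ) := by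
        intro j h1 h2
        rw [toZ_sub h1 h2, toZ_mem_image hocc (by simp only [Finset.mem_Icc]; omega)]
      have hJmem : (p - sb) ∈ (Finset.Icc 1 k).filter
          (fun j : ℕ => toZ m p - (j : ZMod (m + 1)) ∉ occ.image (toZ m)) := by
        simp only [Finset.mem_filter, Finset.mem_Icc]
        refine ⟨⟨hjs1, hjsk⟩, ?_⟩
        rw [htr _ hjs1 (by omega), show p - (p - sb) = sb by omega]
        exact hsbm.2
      have hJne : ((Finset.Icc 1 k).filter
          (fun j : ℕ => toZ m p - (j : ZMod (m + 1)) ∉ occ.image (toZ m))).Nonempty :=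
        ⟨_, hJmem⟩
      rw [cNext, if_neg hcond, dif_pos hJne]
      have hmin : ((Finset.Icc 1 k).filter
          (fun j : ℕ => toZ m p - (j : ZMod (m + 1)) ∉ occ.image (toZ m))).min' hJne
          = p - sb := by
        apply le_antisymm
        · exact Finset.min'_le _ _ hJmem
        · apply Finset.le_min'
          intro j hj
          by_contra hlt
          push_neg at hlt
          simp only [Finset.mem_filter, Finset.mem_Icc] at hj
          have hj1 : 1 ≤ j := hj.1.1
          have hjp : j ≤ p - 1 := by omega
          have hmemocc : p - j ∈ occ := by
            by_contra hno
            have : p - j ∈ (Finset.Ico (max 1 (p - k)) p).filter (fun j => j ∉ occ) := by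
              simp only [Finset.mem_filter, Finset.mem_Ico]
              exact ⟨⟨max_le (by omega) (by omega), by omega⟩, hno⟩
            have := Finset.le_max' _ _ this
            rw [← hsb] at this
            omega
          rw [htr j hj1 hjp] at hj
          exact hj.2 hmemocc
      rw [hmin, toZ_sub hjs1 (by omega), show p - (p - sb) = sb by omega, hs]
    · -- forward case
      have hJe := backup_empty_toZ hocc hp2 hpm hW
      by_cases hF : ((Finset.Ioc p (m + 1)).filter (fun j => j ∉ occ)).Nonempty
      · rw [parkSpot_of_forward hpo hW hF, Option.some_inj] at hs
        set sf := ((Finset.Ioc p (m + 1)).filter (fun j => j ∉ occ)).min' hF with hsf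
        have hsfm := Finset.min'_mem _ hF
        rw [← hsf] at hsfm
        simp only [Finset.mem_filter, Finset.mem_Ioc] at hsfm
        have htr : ∀ j, 1 ≤ j → p + j ≤ m + 1 →
            ((toZ m p + (j : ZMod (m + 1)) ∉ occ.image (toZ m)) ↔ p + j ∉ occ) := by
          intro j h1 h2
          rw [toZ_add j (by omega), toZ_mem_image hocc (by simp only [Finset.mem_Icc]; omega)]
        have hJfmem : (sf - p) ∈ (Finset.Icc 1 m).filter
            (fun j : ℕ => toZ m p + (j : ZMod (m + 1)) ∉ occ.image (toZ m)) := by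
          simp only [Finset.mem_filter, Finset.mem_Icc]
          refine ⟨⟨by omega, by omega⟩, ?_⟩
          rw [htr _ (by omega) (by omega), show p + (sf - p) = sf by omega]
          exact hsfm.2
        have hJfne : ((Finset.Icc 1 m).filter
            (fun j : ℕ => toZ m p + (j : ZMod (m + 1)) ∉ occ.image (toZ m))).Nonempty :=
          ⟨_, hJfmem⟩
        rw [cNext, if_neg hcond, dif_neg hJe, dif_pos hJfne]
        have hmin : ((Finset.Icc 1 m).filter
            (fun j : ℕ => toZ m p + (j : ZMod (m + 1)) ∉ occ.image (toZ m))).min' hJfne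
            = sf - p := by
          apply le_antisymm
          · exact Finset.min'_le _ _ hJfmem
          · apply Finset.le_min'
            intro j hj
            by_contra hlt
            push_neg at hlt
            simp only [Finset.mem_filter, Finset.mem_Icc] at hj
            have hj1 : 1 ≤ j := hj.1.1
            have hmemocc : p + j ∈ occ := by
              by_contra hno
              have : p + j ∈ (Finset.Ioc p (m + 1)).filter (fun j => j ∉ occ) := by
                simp only [Finset.mem_filter, Finset.mem_Ioc]
                exact ⟨⟨by omega, by omega⟩, hno⟩
              have := Finset.min'_le _ _ this
              rw [← hsf] at this
              omega
            rw [htr j hj1 (by omega)] at hj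
            exact hj.2 hmemocc
        rw [hmin, toZ_add (sf - p) (by omega), show p + (sf - p) = sf by omega, hs]
      · rw [parkSpot_of_fail hpo hW hF] at hs
        exact absurd hs (by simp)
  · rw [parkSpot_of_not_mem hpo, Option.some_inj] at hs
    subst hs
    rw [cNext, if_pos
      (fun h => hpo ((toZ_mem_image hocc (by simp only [Finset.mem_Icc]; omega)).mp h))]

lemma cstep_none {occ : Finset ℕ} (hocc : occ ⊆ Finset.Icc 2 (m + 1)) {p : ℕ}
    (hp2 : 2 ≤ p) (hpm : p ≤ m + 1) (hs : parkSpot (m + 1) occ p k = none) :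
    cNext m k (occ.image (toZ m)) (toZ m p) = 0 := by
  have hpo : p ∈ occ := by
    by_contra hpo
    rw [parkSpot_of_not_mem hpo] at hs
    exact Option.some_ne_none _ hs
  have hcond : ¬ (toZ m p ∉ occ.image (toZ m)) :=
    not_not_intro ((toZ_mem_image hocc (by simp only [Finset.mem_Icc]; omega)).mpr hpo)
  have hW : ¬ ((Finset.Ico (max 1 (p - k)) p).filter (fun j => j ∉ occ)).Nonempty := by
    intro hW
    rw [parkSpot_of_backup hpo hW] at hs
    exact Option.some_ne_none _ hs
  have hF : ¬ ((Finset.Ioc p (m + 1)).filter (fun j => j ∉ occ)).Nonempty := by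
    intro hF
    rw [parkSpot_of_forward hpo hW hF] at hs
    exact Option.some_ne_none _ hs
  have hJe := backup_empty_toZ hocc hp2 hpm hW
  have htr : ∀ j, 1 ≤ j → p + j ≤ m + 1 →
      ((toZ m p + (j : ZMod (m + 1)) ∉ occ.image (toZ m)) ↔ p + j ∉ occ) := by
    intro j h1 h2
    rw [toZ_add j (by omega), toZ_mem_image hocc (by simp only [Finset.mem_Icc]; omega)]
  have hJfmem : (m + 2 - p) ∈ (Finset.Icc 1 m).filter
      (fun j : ℕ => toZ m p + (j : ZMod (m + 1)) ∉ occ.image (toZ m)) := by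
    simp only [Finset.mem_filter, Finset.mem_Icc]
    refine ⟨⟨by omega, by omega⟩, ?_⟩
    rw [toZ_wrapf hp2 hpm]
    exact zero_not_mem_image hocc
  have hJfne : ((Finset.Icc 1 m).filter
      (fun j : ℕ => toZ m p + (j : ZMod (m + 1)) ∉ occ.image (toZ m))).Nonempty :=
    ⟨_, hJfmem⟩
  rw [cNext, if_neg hcond, dif_neg hJe, dif_pos hJfne]
  have hmin : ((Finset.Icc 1 m).filter
      (fun j : ℕ => toZ m p + (j : ZMod (m + 1)) ∉ occ.image (toZ m))).min' hJfne
      = m + 2 - p := by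
    apply le_antisymm
    · exact Finset.min'_le _ _ hJfmem
    · apply Finset.le_min'
      intro j hj
      by_contra hlt
      push_neg at hlt
      simp only [Finset.mem_filter, Finset.mem_Icc] at hj
      have hj1 : 1 ≤ j := hj.1.1
      have hmemocc : p + j ∈ occ := by
        by_contra hno
        apply hF
        refine ⟨p + j, ?_⟩
        simp only [Finset.mem_filter, Finset.mem_Ioc]
        exact ⟨⟨by omega, by omega⟩, hno⟩
      rw [htr j hj1 (by omega)] at hj
      exact hj.2 hmemocc
  rw [hmin, toZ_wrapf hp2 hpm]

end Corr

end PFaux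
namespace PFaux

section RCount

variable {m k : ℕ}

/-- The set counted by `(m+1)^(m-1)` : sequences on spots `2..m+1` (street `m+1`)
where everybody parks and spot `1` stays free. -/
def RsetF (m k : ℕ) : Finset (Fin m → ℕ) :=
  (Fintype.piFinset fun _ : Fin m => Finset.Icc 2 (m + 1)).filter
    (fun b => AllPark (m + 1) m b (fun _ => k) ∧
      (1 : ℕ) ∉ occUpTo (m + 1) m b (fun _ => k) m)

lemma lin_to_circ {b : Fin m → ℕ} (hbv : ∀ q, b q ∈ Finset.Icc 2 (m + 1))
    (hall : AllPark (m + 1) m b (fun _ => k))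
    (h1 : (1 : ℕ) ∉ occUpTo (m + 1) m b (fun _ => k) m) :
    ∀ t, t ≤ m → cOcc m k (fun q => toZ m (b q)) t
      = (occUpTo (m + 1) m b (fun _ => k) t).image (toZ m) := by
  intro t
  induction t with
  | zero => intro _; simp [cOcc_zero, occUpTo]
  | succ t ih =>
    intro ht1
    have ht : t < m := ht1
    have hsub : occUpTo (m + 1) m b (fun _ => k) t ⊆ Finset.Icc 2 (m + 1) :=
      occR_subset hbv h1 (by omega)
    have hsome := hall ⟨t, ht⟩
    unfold outcome at hsome
    obtain ⟨s, hs0⟩ := Option.isSome_iff_exists.mp hsome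
    have hs : parkSpot (m + 1) (occUpTo (m + 1) m b (fun _ => k) t) (b ⟨t, ht⟩) k
        = some s := hs0
    have hbq := hbv ⟨t, ht⟩
    simp only [Finset.mem_Icc] at hbq
    rw [cOcc_succ _ ht, ih (by omega), cstep_some hsub hbq.1 hbq.2 hs,
      occUpTo_succ_some ht hs, Finset.image_insert]

lemma lin_to_circ_gap {b : Fin m → ℕ} (hbv : ∀ q, b q ∈ Finset.Icc 2 (m + 1))
    (hall : AllPark (m + 1) m b (fun _ => k))
    (h1 : (1 : ℕ) ∉ occUpTo (m + 1) m b (fun _ => k) m) :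
    cGap m k (fun q => toZ m (b q)) = 0 := by
  rw [cGap_eq_zero_iff, lin_to_circ hbv hall h1 m le_rfl]
  exact zero_not_mem_image (occR_subset hbv h1 le_rfl)

lemma circ_pref_ne_zero {β : Fin m → ZMod (m + 1)}
    (hGood : (0 : ZMod (m + 1)) ∉ cOcc m k β m) (q : Fin m) : β q ≠ 0 := by
  intro h0
  have hnm : (0 : ZMod (m + 1)) ∉ cOcc m k β (q : ℕ) :=
    fun h => hGood (cOcc_mono β (by omega) h)
  have : cNext m k (cOcc m k β (q : ℕ)) (β ⟨(q : ℕ), q.isLt⟩) = 0 := by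
    rw [show (⟨(q : ℕ), q.isLt⟩ : Fin m) = q from Fin.ext rfl, h0, cNext, if_pos hnm]
  apply hGood
  apply cOcc_mono β (show (q : ℕ) + 1 ≤ m by omega)
  rw [cOcc_succ _ q.isLt, this]
  exact Finset.mem_insert_self _ _

lemma circ_to_lin {β : Fin m → ZMod (m + 1)}
    (hGood : (0 : ZMod (m + 1)) ∉ cOcc m k β m) :
    ∀ t, t ≤ m →
      ((occUpTo (m + 1) m (fun q => (β q).val + 1) (fun _ => k) t).image (toZ m)
        = cOcc m k β t) ∧
      (∀ j : Fin m, (j : ℕ) < t →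
        (outcome (m + 1) m (fun q => (β q).val + 1) (fun _ => k) j).isSome) := by
  set b : Fin m → ℕ := fun q => (β q).val + 1 with hbdef
  have hbv : ∀ q, b q ∈ Finset.Icc 2 (m + 1) := by
    intro q
    have h1 : (β q).val ≠ 0 := (ZMod.val_ne_zero _).mpr (circ_pref_ne_zero hGood q)
    have h2 : (β q).val < m + 1 := ZMod.val_lt _
    simp only [hbdef, Finset.mem_Icc]
    omega
  have htoZb : ∀ q, toZ m (b q) = β q := by
    intro q
    simp only [hbdef]
    unfold toZ
    rw [show (β q).val + 1 - 1 = (β q).val from rfl]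
    exact ZMod.natCast_rightInverse (β q)
  intro t
  induction t with
  | zero =>
    intro _
    refine ⟨by simp [cOcc_zero, occUpTo], fun j hj => absurd hj (Nat.not_lt_zero _)⟩
  | succ t ih =>
    intro ht1
    have ht : t < m := ht1
    obtain ⟨ihocc, ihsome⟩ := ih (by omega)
    have hsub : occUpTo (m + 1) m b (fun _ => k) t ⊆ Finset.Icc 2 (m + 1) := by
      intro x hx
      have h1 : x ∈ Finset.Icc 1 (m + 1) := by
        refine occUpTo_subset_Icc _ (fun q => ?_) t hx
        have := hbv q; simp only [Finset.mem_Icc] at *; omega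
      have h2 : x ≠ 1 := by
        rintro rfl
        apply hGood
        apply cOcc_mono β (show t ≤ m by omega)
        rw [← ihocc]
        have : toZ m 1 = (0 : ZMod (m + 1)) := by unfold toZ; simp
        rw [← this]
        exact Finset.mem_image_of_mem _ hx
      simp only [Finset.mem_Icc] at *
      omega
    have hbq := hbv ⟨t, ht⟩
    simp only [Finset.mem_Icc] at hbq
    cases hres : parkSpot (m + 1) (occUpTo (m + 1) m b (fun _ => k) t) (b ⟨t, ht⟩) k with
    | none =>
      exfalso
      have := cstep_none hsub hbq.1 hbq.2 hres
      rw [ihocc, htoZb ⟨t, ht⟩] at this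
      apply hGood
      apply cOcc_mono β (show t + 1 ≤ m by omega)
      rw [cOcc_succ _ ht, this]
      exact Finset.mem_insert_self _ _
    | some s =>
      have hcn := cstep_some hsub hbq.1 hbq.2 hres
      rw [ihocc, htoZb ⟨t, ht⟩] at hcn
      constructor
      · rw [occUpTo_succ_some ht hres, Finset.image_insert, ihocc,
          cOcc_succ _ ht, hcn]
      · intro j hj
        rcases Nat.lt_or_ge (j : ℕ) t with h' | h'
        · exact ihsome j h'
        · have hjt : (j : ℕ) = t := by omega
          have : j = ⟨t, ht⟩ := Fin.ext hjt
          subst this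
          unfold outcome
          rw [hres]
          rfl

lemma card_RsetF : (RsetF m k).card = (m + 1) ^ (m - 1) := by
  rw [← card_cGap_zero (m := m) (k := k)]
  apply Finset.card_bij' (fun b _ => fun q => toZ m (b q)) (fun β _ => fun q => (β q).val + 1)
  · intro b hb
    simp only [RsetF, Finset.mem_filter, Fintype.mem_piFinset] at hb
    simp only [Finset.mem_filter, Finset.mem_univ, true_and]
    exact lin_to_circ_gap hb.1 hb.2.1 hb.2.2
  · intro β hβ
    simp only [Finset.mem_filter, Finset.mem_univ, true_and] at hβ
    rw [cGap_eq_zero_iff] at hβ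
    have hinv := circ_to_lin hβ m le_rfl
    simp only [RsetF, Finset.mem_filter, Fintype.mem_piFinset]
    refine ⟨?_, fun j => hinv.2 j j.isLt, ?_⟩
    · intro q
      have h1 : (β q).val ≠ 0 := (ZMod.val_ne_zero _).mpr (circ_pref_ne_zero hβ q)
      have h2 : (β q).val < m + 1 := ZMod.val_lt _
      simp only [Finset.mem_Icc]
      omega
    · intro h1
      apply hβ
      rw [← hinv.1]
      have : toZ m 1 = (0 : ZMod (m + 1)) := by unfold toZ; simp
      rw [← this]
      exact Finset.mem_image_of_mem _ h1
  · intro b hb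
    simp only [RsetF, Finset.mem_filter, Fintype.mem_piFinset] at hb
    funext q
    have hbq := hb.1 q
    simp only [Finset.mem_Icc] at hbq
    unfold toZ
    rw [ZMod.val_cast_of_lt (by omega)]
    omega
  · intro β _
    funext q
    unfold toZ
    rw [show (β q).val + 1 - 1 = (β q).val from rfl]
    exact ZMod.natCast_rightInverse (β q)

end RCount

end PFaux
namespace PFaux

/-! ### Assembly: counting -/

def Tset (n k : ℕ) : Finset (Fin (n + 1) → ℕ) :=
  (Fintype.piFinset fun _ : Fin (n + 1) => Finset.Icc 1 (n + 1)).filter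
    (fun a => NaplesPF (n + 1) k a)

def gapOf (n k : ℕ) (a : Fin (n + 1) → ℕ) : ℕ :=
  ∑ x ∈ (Finset.Icc 1 (n + 1) \ occUpTo (n + 1) (n + 1) a (fun _ => k) n), x

def PFset (i k : ℕ) : Finset (Fin i → ℕ) :=
  (Fintype.piFinset fun _ : Fin i => Finset.Icc 1 i).filter (fun a => NaplesPF i k a)

lemma gap_spec {n k : ℕ} {a : Fin (n + 1) → ℕ} (ha : a ∈ Tset n k) :
    Finset.Icc 1 (n + 1) \ occUpTo (n + 1) (n + 1) a (fun _ => k) n = {gapOf n k a} ∧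
    gapOf n k a ∈ Finset.Icc 1 (n + 1) := by
  simp only [Tset, Finset.mem_filter, Fintype.mem_piFinset] at ha
  have hcard : (occUpTo (n + 1) (n + 1) a (fun _ => k) n).card = n :=
    card_occUpTo (by omega) (fun j _ => ha.2 j)
  have hsub : occUpTo (n + 1) (n + 1) a (fun _ => k) n ⊆ Finset.Icc 1 (n + 1) :=
    occUpTo_subset_Icc _ ha.1 n
  have hone : (Finset.Icc 1 (n + 1) \ occUpTo (n + 1) (n + 1) a (fun _ => k) n).card = 1 := by
    rw [Finset.card_sdiff_of_subset hsub, Nat.card_Icc, hcard]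
    omega
  obtain ⟨g, hg⟩ := Finset.card_eq_one.mp hone
  have hgap : gapOf n k a = g := by unfold gapOf; rw [hg, Finset.sum_singleton]
  have hmem : g ∈ Finset.Icc 1 (n + 1) := by
    have : g ∈ Finset.Icc 1 (n + 1) \ occUpTo (n + 1) (n + 1) a (fun _ => k) n := by
      rw [hg]; exact Finset.mem_singleton_self _
    exact (Finset.mem_sdiff.mp this).1
  rw [hgap]
  exact ⟨hg, hmem⟩

lemma outcome_castSucc {N n k : ℕ} (a : Fin (n + 1) → ℕ) (j : Fin n) :
    outcome N (n + 1) a (fun _ => k) j.castSucc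
      = outcome N n (fun x => a x.castSucc) (fun _ => k) j := by
  unfold outcome
  rw [occUpTo_castSucc a (fun _ => k) (show ((j.castSucc : Fin (n + 1)) : ℕ) ≤ n by simp)]
  rfl

lemma class_unpack {i m k : ℕ} {S : Finset (Fin (i + m))} (hSi : S.card = i)
    {a : Fin (i + m + 1) → ℕ}
    (hTa : a ∈ Tset (i + m) k) (hgapa : gapOf (i + m) k a - 1 = i)
    (hcls : Finset.univ.filter (fun j : Fin (i + m) => a j.castSucc ≤ i) = S) :
    (∀ j, a j ∈ Finset.Icc 1 (i + m + 1)) ∧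
    (∀ j : Fin (i + m),
      (outcome (i + m + 1) (i + m) (fun x => a x.castSucc) (fun _ => k) j).isSome) ∧
    (i + 1 ∉ occUpTo (i + m + 1) (i + m) (fun x => a x.castSucc) (fun _ => k) (i + m)) ∧
    (∀ j, j ∈ S ↔ (fun x => a x.castSucc) j ≤ i) ∧
    a ⟨i + m, Nat.lt_succ_self _⟩ ≤ i + 1 + k := by
  obtain ⟨hspec, hmem⟩ := gap_spec hTa
  simp only [Tset, Finset.mem_filter, Fintype.mem_piFinset] at hTa
  have hv := hTa.1
  have hpark := hTa.2
  have hg : gapOf (i + m) k a = i + 1 := by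
    simp only [Finset.mem_Icc] at hmem
    omega
  rw [hg] at hspec
  have hall : ∀ j : Fin (i + m),
      (outcome (i + m + 1) (i + m) (fun x => a x.castSucc) (fun _ => k) j).isSome := by
    intro j
    rw [← outcome_castSucc]
    exact hpark j.castSucc
  have hgapocc : i + 1 ∉ occUpTo (i + m + 1) (i + m + 1) a (fun _ => k) (i + m) := by
    intro h
    have : i + 1 ∈ Finset.Icc 1 (i + m + 1) \
        occUpTo (i + m + 1) (i + m + 1) a (fun _ => k) (i + m) := by
      rw [hspec]; exact Finset.mem_singleton_self _
    exact (Finset.mem_sdiff.mp this).2 h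
  have hgap' : i + 1 ∉ occUpTo (i + m + 1) (i + m) (fun x => a x.castSucc)
      (fun _ => k) (i + m) := by
    rwa [occUpTo_castSucc a (fun _ => k) le_rfl] at hgapocc
  have hsplit : ∀ j, j ∈ S ↔ (fun x => a x.castSucc) j ≤ i := by
    intro j
    rw [← hcls]
    simp
  refine ⟨hv, hall, hgap', hsplit, ?_⟩
  -- the last car must reach the gap
  have hSc : Sᶜ.card = m := by
    have := Finset.card_add_card_compl S
    rw [hSi, Fintype.card_fin] at this
    omega
  have hmain := split_main hSi hSc (fun j => hv j.castSucc) hall hgap' hsplit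
  have hfull : occUpTo (i + m + 1) (i + m + 1) a (fun _ => k) (i + m)
      = Finset.Icc 1 (i + m + 1) \ {i + 1} := by
    rw [occUpTo_castSucc a (fun _ => k) le_rfl]
    exact hmain.2.2.2.2.2
  by_contra hb
  push_neg at hb
  have hlast := hpark ⟨i + m, Nat.lt_succ_self _⟩
  unfold outcome at hlast
  rw [show ((⟨i + m, Nat.lt_succ_self _⟩ : Fin (i + m + 1)) : ℕ) = i + m from rfl, hfull] at hlast
  have hbv := hv ⟨i + m, Nat.lt_succ_self _⟩
  simp only [Finset.mem_Icc] at hbv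
  rw [show ((fun _ : Fin (i + m + 1) => k) ⟨i + m, Nat.lt_succ_self _⟩) = k from rfl,
    lastCar_fail (by omega) (by omega) hbv.1 hbv.2 (by omega)] at hlast
  simp at hlast

lemma class_card (i m k : ℕ) (S : Finset (Fin (i + m))) (hSi : S.card = i) :
    (((Tset (i + m) k).filter (fun a => gapOf (i + m) k a - 1 = i)).filter
      (fun a => Finset.univ.filter (fun j : Fin (i + m) => a j.castSucc ≤ i) = S)).card
    = numNaplesPF i k * ((m + 1) ^ (m - 1) * min (i + 1 + k) (i + m + 1)) := by
  have hSc : Sᶜ.card = m := by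
    have := Finset.card_add_card_compl S
    rw [hSi, Fintype.card_fin] at this
    omega
  have hmin1 : 1 ≤ min (i + 1 + k) (i + m + 1) := by omega
  have hcard : ((PFset i k) ×ˢ ((RsetF m k) ×ˢ
      Finset.Icc 1 (min (i + 1 + k) (i + m + 1)))).card
      = numNaplesPF i k * ((m + 1) ^ (m - 1) * min (i + 1 + k) (i + m + 1)) := by
    rw [Finset.card_product, Finset.card_product, card_RsetF, Nat.card_Icc]
    rfl
  rw [← hcard]
  refine Finset.card_bij'
    (fun a _ => ((subSeq S hSi (fun x => a x.castSucc),
      (subSeqR Sᶜ hSc (fun x => a x.castSucc) i, a ⟨i + m, Nat.lt_succ_self _⟩))))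
    (fun p _ => mergeAll i m p.2.2 p.1 p.2.1 S hSi hSc) ?_ ?_ ?_ ?_
  · -- forward membership
    intro a ha
    simp only [Finset.mem_filter] at ha
    obtain ⟨⟨hTa, hgapa⟩, hcls⟩ := ha
    obtain ⟨hv, hall, hgap', hsplit, hb⟩ := class_unpack hSi hTa hgapa hcls
    obtain ⟨hAL, hvL, hAR, hR1, hvR, _⟩ :=
      split_main hSi hSc (fun j => hv j.castSucc) hall hgap' hsplit
    simp only [Finset.mem_product]
    refine ⟨?_, ?_, ?_⟩
    · simp only [PFset, Finset.mem_filter, Fintype.mem_piFinset]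
      exact ⟨hvL, hAL⟩
    · simp only [RsetF, Finset.mem_filter, Fintype.mem_piFinset]
      exact ⟨hvR, hAR, hR1⟩
    · have := hv ⟨i + m, Nat.lt_succ_self _⟩
      simp only [Finset.mem_Icc] at this ⊢
      omega
  · -- backward membership
    intro p hp
    simp only [Finset.mem_product, PFset, RsetF, Finset.mem_filter,
      Fintype.mem_piFinset] at hp
    obtain ⟨⟨hvL, hAL⟩, ⟨hvR, hAR, hR1⟩, hbmem⟩ := hp
    simp only [Finset.mem_Icc] at hbmem
    have hb1 : 1 ≤ p.2.2 := hbmem.1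
    have hbk : p.2.2 ≤ i + 1 + k := le_trans hbmem.2 (min_le_left _ _)
    have hbN : p.2.2 ≤ i + m + 1 := le_trans hbmem.2 (min_le_right _ _)
    simp only [Finset.mem_filter]
    refine ⟨⟨?_, ?_⟩, ?_⟩
    · simp only [Tset, Finset.mem_filter, Fintype.mem_piFinset]
      exact ⟨mergeAll_val hSi hSc hvL hvR hb1 hbN,
        mergeAll_isPF hSi hSc hvL hvR hAL hAR hR1 hb1 hbk hbN⟩
    · have := mergeAll_gapset hSi hSc hvL hvR hAL hAR hR1 hb1 hbk hbN
      unfold gapOf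
      rw [this, Finset.sum_singleton]
      omega
    · exact mergeAll_class hSi hSc hvL hvR
  · -- left inverse : merge of the split is the original
    intro a ha
    simp only [Finset.mem_filter] at ha
    obtain ⟨⟨hTa, hgapa⟩, hcls⟩ := ha
    funext j
    show mergeAll i m (a ⟨i + m, Nat.lt_succ_self _⟩) (subSeq S hSi (fun x => a x.castSucc))
      (subSeqR Sᶜ hSc (fun x => a x.castSucc) i) S hSi hSc j = a j
    unfold mergeAll
    split_ifs with hj
    · unfold mergePref
      split_ifs with hj2
      · have h5 := congrArg (Subtype.val)
          (OrderIso.apply_symm_apply (S.orderIsoOfFin hSi) ⟨⟨(j : ℕ), hj⟩, hj2⟩)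
        show a (Fin.castSucc ((S.orderIsoOfFin hSi)
          ((S.orderIsoOfFin hSi).symm ⟨⟨(j : ℕ), hj⟩, hj2⟩) : Fin (i + m))) = a j
        rw [h5]
        exact congrArg a (Fin.ext (by simp))
      · have h5 := congrArg (Subtype.val)
          (OrderIso.apply_symm_apply (Sᶜ.orderIsoOfFin hSc)
            ⟨⟨(j : ℕ), hj⟩, Finset.mem_compl.mpr hj2⟩)
        show a (Fin.castSucc ((Sᶜ.orderIsoOfFin hSc)
          ((Sᶜ.orderIsoOfFin hSc).symm
            ⟨⟨(j : ℕ), hj⟩, Finset.mem_compl.mpr hj2⟩) : Fin (i + m))) - i + i = a j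
        rw [h5]
        have heq : (Fin.castSucc (⟨(j : ℕ), hj⟩ : Fin (i + m))) = j := Fin.ext (by simp)
        rw [heq]
        have hnotin : i + 1 ≤ a j := by
          have h6 : (⟨(j : ℕ), hj⟩ : Fin (i + m)) ∉ S := hj2
          rw [← hcls] at h6
          simp only [Finset.mem_filter, Finset.mem_univ, true_and, not_le] at h6
          rw [heq] at h6
          omega
        omega
    · congr 1
      exact (Fin.ext (by have := j.isLt; simp; omega)).symm
  · -- right inverse : split of the merge is the original triple
    intro p hp
    simp only [Finset.mem_product, PFset, RsetF, Finset.mem_filter,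
      Fintype.mem_piFinset] at hp
    obtain ⟨⟨hvL, hAL⟩, ⟨hvR, hAR, hR1⟩, hbmem⟩ := hp
    have h1 : subSeq S hSi (fun x => mergeAll i m p.2.2 p.1 p.2.1 S hSi hSc x.castSucc)
        = p.1 := by
      funext q
      unfold subSeq
      rw [show (fun x : Fin (i + m) => mergeAll i m p.2.2 p.1 p.2.1 S hSi hSc x.castSucc)
          ((S.orderIsoOfFin hSi q : Fin (i + m)))
          = mergePref i m p.1 p.2.1 S hSi hSc ((S.orderIsoOfFin hSi q : Fin (i + m))) by
        rw [← mergeAll_castSucc hSi hSc]]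
      unfold mergePref
      rw [dif_pos (S.orderIsoOfFin hSi q).2]
      congr 1
      rw [show (⟨((S.orderIsoOfFin hSi q : Fin (i + m))), (S.orderIsoOfFin hSi q).2⟩
          : {x // x ∈ S}) = S.orderIsoOfFin hSi q from Subtype.coe_eta _ _,
        OrderIso.symm_apply_apply]
    have h2 : subSeqR Sᶜ hSc (fun x => mergeAll i m p.2.2 p.1 p.2.1 S hSi hSc x.castSucc) i
        = p.2.1 := by
      funext q
      unfold subSeqR
      rw [show (fun x : Fin (i + m) => mergeAll i m p.2.2 p.1 p.2.1 S hSi hSc x.castSucc)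
          ((Sᶜ.orderIsoOfFin hSc q : Fin (i + m)))
          = mergePref i m p.1 p.2.1 S hSi hSc ((Sᶜ.orderIsoOfFin hSc q : Fin (i + m))) by
        rw [← mergeAll_castSucc hSi hSc]]
      unfold mergePref
      rw [dif_neg (Finset.mem_compl.mp (Sᶜ.orderIsoOfFin hSc q).2)]
      rw [show (⟨((Sᶜ.orderIsoOfFin hSc q : Fin (i + m))),
          Finset.mem_compl.mpr (Finset.mem_compl.mp (Sᶜ.orderIsoOfFin hSc q).2)⟩
          : {x // x ∈ Sᶜ}) = Sᶜ.orderIsoOfFin hSc q from Subtype.coe_eta _ _,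
        OrderIso.symm_apply_apply]
      omega
    have h3 : mergeAll i m p.2.2 p.1 p.2.1 S hSi hSc ⟨i + m, Nat.lt_succ_self _⟩ = p.2.2 := by
      unfold mergeAll
      rw [dif_neg (by simp)]
    exact Prod.ext h1 (Prod.ext h2 h3)

lemma fiber_card (n i k : ℕ) (hi : i ≤ n) :
    ((Tset n k).filter (fun a => gapOf n k a - 1 = i)).card
      = Nat.choose n i * min (i + 1 + k) (n + 1) * numNaplesPF i k
        * (n - i + 1) ^ (n - i - 1) := by
  obtain ⟨m, rfl⟩ : ∃ m, n = i + m := ⟨n - i, by omega⟩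
  rw [show i + m - i = m by omega]
  rw [Finset.card_eq_sum_card_fiberwise
    (f := fun a => Finset.univ.filter (fun j : Fin (i + m) => a j.castSucc ≤ i))
    (t := Finset.univ.powersetCard i) ?hmap]
  case hmap =>
    intro a ha
    simp only [Finset.mem_filter, Finset.coe_filter, Set.mem_setOf_eq] at ha
    rw [Finset.mem_coe, Finset.mem_powersetCard]
    refine ⟨Finset.subset_univ _, ?_⟩
    obtain ⟨hspec, hmem⟩ := gap_spec ha.1
    simp only [Tset, Finset.mem_filter, Fintype.mem_piFinset] at ha
    have hg : gapOf (i + m) k a = i + 1 := by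
      simp only [Finset.mem_Icc] at hmem
      omega
    rw [hg] at hspec
    have hgapocc : i + 1 ∉ occUpTo (i + m + 1) (i + m + 1) a (fun _ => k) (i + m) := by
      intro h
      have : i + 1 ∈ Finset.Icc 1 (i + m + 1) \
          occUpTo (i + m + 1) (i + m + 1) a (fun _ => k) (i + m) := by
        rw [hspec]; exact Finset.mem_singleton_self _
      exact (Finset.mem_sdiff.mp this).2 h
    have hgap' : i + 1 ∉ occUpTo (i + m + 1) (i + m) (fun x => a x.castSucc)
        (fun _ => k) (i + m) := by
      rwa [occUpTo_castSucc a (fun _ => k) le_rfl] at hgapocc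
    have hall : ∀ j : Fin (i + m),
        (outcome (i + m + 1) (i + m) (fun x => a x.castSucc) (fun _ => k) j).isSome := by
      intro j
      rw [← outcome_castSucc]
      exact ha.1.2 j.castSucc
    exact split_card (fun j => ha.1.1 j.castSucc) hall hgap'
  rw [Finset.sum_congr rfl (fun S hS => class_card i m k S (Finset.mem_powersetCard.mp hS).2),
    Finset.sum_const, Finset.card_powersetCard, Finset.card_univ, Fintype.card_fin,
    smul_eq_mul]
  ring

end PFaux

open PFaux in
/-- for `n ≥ k ≥ 1`,
`|PF_{n+1,k}| = Σ_{i=0}^n C(n,i)·min(i+1+k, n+1)·|PF_{i,k}|·(n−i+1)^{n−i−1}`. -/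
theorem statement4 (n k : ℕ) (hk : 1 ≤ k) (hkn : k ≤ n) :
    numNaplesPF (n + 1) k = ∑ i ∈ Finset.range (n + 1),
      Nat.choose n i * min (i + 1 + k) (n + 1) * numNaplesPF i k
        * (n - i + 1) ^ (n - i - 1) := by
  have h0 : numNaplesPF (n + 1) k = (Tset n k).card := rfl
  rw [h0, Finset.card_eq_sum_card_fiberwise
    (f := fun a => gapOf n k a - 1) (t := Finset.range (n + 1)) ?hmap]
  case hmap =>
    intro a ha
    show gapOf n k a - 1 ∈ Finset.range (n + 1)
    have := (gap_spec ha).2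
    simp only [Finset.mem_Icc] at this
    rw [Finset.mem_range]
    omega
  exact Finset.sum_congr rfl (fun i hi => fiber_card n i k (by
    rw [Finset.mem_range] at hi; omega))
end

section
/- Let n ≥ 1, k ≥ 1, and let α ∈ [n]^n be a k-Naples parking function (α ∈ PF_{n,k}). Then u_α(j) ≤ k for all j ∈ [n]. -/
/-!
A car preferring a spot `≥ j` under a rule that backs up at most `k` spots parks somewhere in
`[j - k, n]`, and distinct cars occupy distinct spots. Hence at most `n - j + k + 1` cars prefer
a spot `≥ j`, which is `u_α(j) ≤ k`.
-/

open Finset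

section Parking

variable {n m : ℕ} {a r : Fin m → ℕ}

lemma parkSpot_spec {occ : Finset ℕ} {p r s : ℕ} (h : parkSpot n occ p r = some s) :
    s ∉ occ ∧ p - r ≤ s ∧ (p ≤ n → s ≤ n) := by
  unfold parkSpot at h
  split_ifs at h with hp hback hfwd <;> cases h
  · have hs := max'_mem _ hback
    simp only [mem_filter, mem_Ico] at hs
    exact ⟨hs.2, by omega, fun _ => by omega⟩
  · have hs := min'_mem _ hfwd
    simp only [mem_filter, mem_Ioc] at hs
    exact ⟨hs.2, by omega, fun _ => hs.1.2⟩
  · exact ⟨hp, Nat.sub_le p r, id⟩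

lemma occUpTo_monotone (n m : ℕ) (a r : Fin m → ℕ) : Monotone (occUpTo n m a r) := by
  refine monotone_nat_of_le_succ fun i => ?_
  rw [occUpTo]
  split
  · split
    · exact subset_insert _ _
    · exact subset_rfl
  · exact subset_rfl

lemma occUpTo_succ_of_outcome_eq_some {i : Fin m} {s : ℕ} (h : outcome n m a r i = some s) :
    occUpTo n m a r (i + 1) = insert s (occUpTo n m a r i) := by
  rw [outcome] at h
  rw [occUpTo, dif_pos i.isLt, h]

lemma mem_occUpTo_of_outcome_eq_some {i : Fin m} {s : ℕ} (h : outcome n m a r i = some s)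
    {j : ℕ} (hij : i.val < j) : s ∈ occUpTo n m a r j :=
  occUpTo_monotone n m a r hij <| (occUpTo_succ_of_outcome_eq_some h) ▸ mem_insert_self _ _

namespace AllPark

def spot (h : AllPark n m a r) (i : Fin m) : ℕ := (outcome n m a r i).get (h i)

lemma outcome_eq (h : AllPark n m a r) (i : Fin m) : outcome n m a r i = some (h.spot i) :=
  (Option.some_get _).symm

lemma spot_injective (h : AllPark n m a r) : Function.Injective h.spot := by
  have hne : ∀ {i i' : Fin m}, i < i' → h.spot i ≠ h.spot i' := fun hlt heq =>
    (parkSpot_spec (h.outcome_eq _)).1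
      (heq ▸ mem_occUpTo_of_outcome_eq_some (h.outcome_eq _) hlt)
  intro i i' heq
  by_contra hii'
  rcases lt_or_gt_of_ne hii' with hlt | hlt
  · exact hne hlt heq
  · exact hne hlt heq.symm

lemma card_filter_le_le {k : ℕ} (h : AllPark n m a r) (ha : ∀ i, a i ≤ n) (hr : ∀ i, r i ≤ k)
    (j : ℕ) : #{i | j ≤ a i} ≤ #(Icc (j - k) n) := by
  refine card_le_card_of_injOn h.spot (fun i hi => ?_) h.spot_injective.injOn
  obtain ⟨-, hlow, hup⟩ := parkSpot_spec (h.outcome_eq i)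
  have hji : j ≤ a i := by simpa using hi
  have hri := hr i
  exact mem_Icc.2 ⟨by omega, hup (ha i)⟩

end AllPark

end Parking

theorem statement5_general (n k : ℕ) (a : Fin n → ℕ)
    (ha : ∀ i, a i ∈ Finset.Icc 1 n) (hpf : NaplesPF n k a) :
    ∀ j ∈ Finset.Icc 1 n, ucount n a j ≤ (k : ℤ) := by
  intro j hj
  have hcard := AllPark.card_filter_le_le hpf (fun i => (mem_Icc.1 (ha i)).2) (fun _ => le_rfl) j
  have hjn := (mem_Icc.1 hj).2
  rw [Nat.card_Icc] at hcard
  unfold ucount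
  omega

/-- if `α ∈ PF_{n,k}` then `u_α(j) ≤ k` for all `j ∈ [n]`. -/
theorem statement5 (n k : ℕ) (hn : 1 ≤ n) (hk : 1 ≤ k) (a : Fin n → ℕ)
    (ha : ∀ i, a i ∈ Finset.Icc 1 n) (hpf : NaplesPF n k a) :
    ∀ j ∈ Finset.Icc 1 n, ucount n a j ≤ (k : ℤ) :=
  statement5_general n k a ha hpf
end

section
/- Let n ≥ 1 and let α = (a_1,…,a_n) ∈ [n]^n be in descending order, i.e. a_1 ≥ a_2 ≥ … ≥ a_n, and let M = max_{j∈[n]} u_α(j). Then α is a k-Naples parking function (α ∈ PF_{n,k}) for every k ≥ M. -/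
open Finset

/- A car that fails to park has found all of `max 1 (a_i - k), …, n` occupied, which takes at
least `n + 1 - max 1 (a_i - k)` earlier cars. Since `α` is descending, at least `i + 1` cars
prefer a spot `≥ a_i`, and `u_α(a_i) ≤ k` bounds that number by `k + n + 1 - a_i`; the two
counts are incompatible. -/

lemma Icc_subset_of_parkSpot_eq_none {n p r : ℕ} {occ : Finset ℕ}
    (h : parkSpot n occ p r = none) : Icc (max 1 (p - r)) n ⊆ occ := by
  unfold parkSpot at h
  split_ifs at h with hp hback hfwd
  intro s hs
  rw [mem_Icc] at hs
  by_contra hs_free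
  rcases lt_trichotomy s p with hlt | rfl | hgt
  · exact hback ⟨s, mem_filter.2 ⟨mem_Ico.2 ⟨hs.1, hlt⟩, hs_free⟩⟩
  · exact hs_free hp
  · exact hfwd ⟨s, mem_filter.2 ⟨mem_Ioc.2 ⟨hgt, hs.2⟩, hs_free⟩⟩

lemma card_occUpTo_le (n m : ℕ) (a r : Fin m → ℕ) (i : ℕ) : #(occUpTo n m a r i) ≤ i := by
  induction i with
  | zero => simp [occUpTo]
  | succ i ih =>
    simp only [occUpTo]
    split_ifs
    · split
      · exact (card_insert_le _ _).trans (by omega)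
      · omega
    · omega

lemma sub_le_of_outcome_eq_none {n m : ℕ} {a r : Fin m → ℕ} {i : Fin m}
    (h : outcome n m a r i = none) : n + 1 - max 1 (a i - r i) ≤ i := by
  have hocc := card_le_card (Icc_subset_of_parkSpot_eq_none h)
  rw [Nat.card_Icc] at hocc
  exact hocc.trans (card_occUpTo_le n m a r i)

lemma Fin.val_add_one_le_card_filter_of_antitone {n : ℕ} {α : Type*} [Preorder α] [DecidableLE α]
    {f : Fin n → α} (hf : Antitone f) (i : Fin n) : i.val + 1 ≤ #{j | f i ≤ f j} := by
  calc i.val + 1 = #(Iic i) := (Fin.card_Iic i).symm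
    _ ≤ #{j | f i ≤ f j} := card_le_card fun j hj => by
      simpa using hf (mem_Iic.1 hj)

theorem statement6_general (n : ℕ) (a : Fin n → ℕ)
    (ha : ∀ i, a i ∈ Finset.Icc 1 n)
    (hdesc : ∀ i j : Fin n, i ≤ j → a j ≤ a i) (k : ℕ)
    (hkM : ∀ j ∈ Finset.Icc 1 n, ucount n a j ≤ (k : ℤ)) :
    NaplesPF n k a := by
  intro i
  rw [Option.isSome_iff_ne_none]
  intro hfail
  have hoccupied : n + 1 - max 1 (a i - k) ≤ i := sub_le_of_outcome_eq_none hfail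
  have hpreferring := Fin.val_add_one_le_card_filter_of_antitone (fun _ _ h => hdesc _ _ h) i
  have hu := hkM (a i) (ha i)
  rw [ucount] at hu
  have hi := i.isLt
  omega

/-- if `α` is in descending order and `k ≥ M = max_{j∈[n]} u_α(j)`,
then `α ∈ PF_{n,k}`. -/
theorem statement6 (n : ℕ) (hn : 1 ≤ n) (a : Fin n → ℕ)
    (ha : ∀ i, a i ∈ Finset.Icc 1 n)
    (hdesc : ∀ i j : Fin n, i ≤ j → a j ≤ a i) (k : ℕ)
    (hkM : ∀ j ∈ Finset.Icc 1 n, ucount n a j ≤ (k : ℤ)) :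
    NaplesPF n k a :=
  statement6_general n a ha hdesc k hkM
end
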